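/- arXiv:2207.09205 — 9 statements merged into one kernel-verified Lean document; each statement's English description precedes it below -/
import Mathlib

section
/- If (X, R_X, I_X) and (Y, R_Y, I_Y) are association schemes, then the composition R_⋏ : (X × Y) × (X × Y) → I_X × I_Y → I_X ⋏ I_Y, where the first map is R_X × R_Y and the second is lex, defines an association scheme on the set X × Y (the wreath product X ⋏ Y). -/
open Matrix Kronecker

set_option linter.unusedSectionVars false

/-- The `i`-th adjacency matrix of a relation map `R : X → X → I`. -/
def adjMat {X I : Type*} [DecidableEq I] (R : X → X → I) (i : I) : Matrix X X ℂ :=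
  fun x y => if R x y = i then 1 else 0

/-- An association scheme on a finite set `X` with relation set `I`:
a surjective relation map whose adjacency matrices contain the identity matrix,
are closed under transpose, and span a set closed under matrix multiplication. -/
structure AssocScheme (X I : Type*) [Fintype X] [Fintype I] [DecidableEq X] [DecidableEq I] where
  R : X → X → I
  surj : Function.Surjective fun p : X × X => R p.1 p.2
  i0 : I
  ident : ∀ x y, R x y = i0 ↔ x = y
  symm : ∀ i : I, ∃ i' : I, ∀ x y, R x y = i ↔ R y x = i'
  closed : ∀ i j : I, ∃ c : I → ℂ,
    adjMat R i * adjMat R j = ∑ k : I, c k • adjMat R k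

/-- The relation map of the wreath product `X ⋏ Y`: compare the `X`-components first;
if they are equal, use the relation of the `Y`-components. -/
def wreathR {X Y IX IY : Type*} [DecidableEq IX]
    (RX : X → X → IX) (i0X : IX) (RY : Y → Y → IY) :
    X × Y → X × Y → ({i : IX // i ≠ i0X} ⊕ IY) :=
  fun p q => if h : RX p.1 q.1 = i0X then Sum.inr (RY p.2 q.2)
    else Sum.inl ⟨RX p.1 q.1, h⟩

/-- The lex map `I_X × I_Y → (I_X \ {i₀}) ⊔ I_Y`. -/
def lexMap {IX IY : Type*} [DecidableEq IX] (i0 : IX) :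
    IX × IY → ({i : IX // i ≠ i0} ⊕ IY) :=
  fun p => if h : p.1 = i0 then Sum.inr p.2 else Sum.inl ⟨p.1, h⟩

/-- all-ones matrix -/
def JJ (X : Type*) : Matrix X X ℂ := fun _ _ => 1

section helpers
variable {X I : Type*} [Fintype X] [Fintype I] [DecidableEq X] [DecidableEq I]

lemma adjMat_i0 (S : AssocScheme X I) : adjMat S.R S.i0 = 1 := by
  ext x y
  simp [adjMat, S.ident, Matrix.one_apply]

lemma sum_adjMat (S : AssocScheme X I) : ∑ i : I, adjMat S.R i = JJ X := by
  ext x y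
  simp [adjMat, JJ, Matrix.sum_apply]

lemma JJ_mul_JJ : JJ X * JJ X = (Fintype.card X : ℂ) • JJ X := by
  ext x y
  simp [JJ, Matrix.mul_apply]

lemma adjMat_rowsum (S : AssocScheme X I) (i : I) :
    ∃ k : ℂ, ∀ x : X, ∑ y : X, adjMat S.R i x y = k := by
  obtain ⟨i', hi⟩ := S.symm i
  obtain ⟨c, hc⟩ := S.closed i i'
  refine ⟨c S.i0, fun x => ?_⟩
  have h1 : (adjMat S.R i * adjMat S.R i') x x = ∑ y : X, adjMat S.R i x y := by
    rw [Matrix.mul_apply]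
    refine Finset.sum_congr rfl fun y _ => ?_
    simp only [adjMat, hi x y]
    split_ifs <;> simp
  have h2 : (∑ k : I, c k • adjMat S.R k) x x = c S.i0 := by
    simp only [Matrix.sum_apply, Matrix.smul_apply, adjMat, smul_eq_mul]
    have : ∀ k : I, (S.R x x = k) ↔ (S.i0 = k) := by
      intro k; rw [(by rw [S.ident] : S.R x x = S.i0)]
    simp only [this]
    simp [Finset.sum_ite_eq]
  rw [← h1, hc, h2]

lemma adjMat_mul_JJ (S : AssocScheme X I) (i : I) :
    ∃ k : ℂ, adjMat S.R i * JJ X = k • JJ X := by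
  obtain ⟨k, hk⟩ := adjMat_rowsum S i
  refine ⟨k, ?_⟩
  ext x y
  simp [Matrix.mul_apply, JJ, hk x]

lemma adjMat_transpose (S : AssocScheme X I) (i : I) :
    ∃ i' : I, adjMat S.R i = (adjMat S.R i')ᵀ := by
  obtain ⟨i', hi⟩ := S.symm i
  refine ⟨i', ?_⟩
  ext x y
  simp [adjMat, Matrix.transpose_apply, hi x y]

lemma JJ_mul_adjMat (S : AssocScheme X I) (i : I) :
    ∃ k : ℂ, JJ X * adjMat S.R i = k • JJ X := by
  obtain ⟨i', hi⟩ := adjMat_transpose S i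
  obtain ⟨k, hk⟩ := adjMat_mul_JJ S i'
  refine ⟨k, ?_⟩
  have hJ : (JJ X)ᵀ = JJ X := by ext x y; simp [JJ]
  calc JJ X * adjMat S.R i = (adjMat S.R i' * JJ X)ᵀ := by
        rw [Matrix.transpose_mul, hJ, ← hi]
    _ = k • JJ X := by rw [hk, Matrix.transpose_smul, hJ]

end helpers

section wreath
variable {X Y IX IY : Type*}
    [Fintype X] [Fintype Y] [Fintype IX] [Fintype IY]
    [DecidableEq X] [DecidableEq Y] [DecidableEq IX] [DecidableEq IY]
    (SX : AssocScheme X IX) (SY : AssocScheme Y IY)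

lemma adjMat_wreath_inr (b : IY) :
    adjMat (wreathR SX.R SX.i0 SY.R) (Sum.inr b)
      = adjMat SX.R SX.i0 ⊗ₖ adjMat SY.R b := by
  ext ⟨x, y⟩ ⟨x', y'⟩
  simp only [adjMat, wreathR, kroneckerMap_apply]
  by_cases h : SX.R x x' = SX.i0 <;> simp [h]

lemma adjMat_wreath_inl (a : {i : IX // i ≠ SX.i0}) :
    adjMat (wreathR SX.R SX.i0 SY.R) (Sum.inl a)
      = adjMat SX.R a.1 ⊗ₖ JJ Y := by
  ext ⟨x, y⟩ ⟨x', y'⟩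
  simp only [adjMat, wreathR, JJ, kroneckerMap_apply, mul_one]
  by_cases h : SX.R x x' = SX.i0
  · have : ¬ (SX.R x x' = a.1) := fun hh => a.2 (hh ▸ h)
    simp [h, this, (Ne.symm a.2)]
  · simp only [dif_neg h, Sum.inl.injEq, Subtype.ext_iff]

lemma kron_sum_right {κ : Type*} [Fintype κ] (A : Matrix X X ℂ) (f : κ → Matrix Y Y ℂ) :
    A ⊗ₖ (∑ k : κ, f k) = ∑ k : κ, A ⊗ₖ f k := by
  ext ⟨x, y⟩ ⟨x', y'⟩
  simp [kroneckerMap_apply, Matrix.sum_apply, Finset.mul_sum]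

lemma kron_sum_left {κ : Type*} [Fintype κ] (f : κ → Matrix X X ℂ) (B : Matrix Y Y ℂ) :
    (∑ k : κ, f k) ⊗ₖ B = ∑ k : κ, f k ⊗ₖ B := by
  ext ⟨x, y⟩ ⟨x', y'⟩
  simp [kroneckerMap_apply, Matrix.sum_apply, Finset.sum_mul]

/-- expansion of a generic linear combination of wreath adjacency matrices -/
lemma wreath_combo (c : ({i : IX // i ≠ SX.i0} ⊕ IY) → ℂ) :
    ∑ k, c k • adjMat (wreathR SX.R SX.i0 SY.R) k
      = ∑ a : {i : IX // i ≠ SX.i0}, c (Sum.inl a) • (adjMat SX.R a.1 ⊗ₖ JJ Y)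
        + ∑ b : IY, c (Sum.inr b) • (adjMat SX.R SX.i0 ⊗ₖ adjMat SY.R b) := by
  rw [Fintype.sum_sum_type]
  congr 1
  · exact Finset.sum_congr rfl fun a _ => by rw [adjMat_wreath_inl]
  · exact Finset.sum_congr rfl fun b _ => by rw [adjMat_wreath_inr]

end wreath

/-- If `X` and `Y` are association schemes, then `lex ∘ (R_X × R_Y)` defines an
association scheme on `X × Y`: the wreath product `X ⋏ Y`. -/
theorem wreath_isAssocScheme {X Y IX IY : Type*}
    [Fintype X] [Fintype Y] [Fintype IX] [Fintype IY]
    [DecidableEq X] [DecidableEq Y] [DecidableEq IX] [DecidableEq IY]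
    (SX : AssocScheme X IX) (SY : AssocScheme Y IY) :
    ∃ S : AssocScheme (X × Y) ({i : IX // i ≠ SX.i0} ⊕ IY),
      S.R = fun p q => lexMap SX.i0 (SX.R p.1 q.1, SY.R p.2 q.2) := by
  obtain ⟨⟨x0, x1⟩, hx01⟩ := SX.surj SX.i0
  obtain ⟨⟨y0, y1⟩, hy01⟩ := SY.surj SY.i0
  refine ⟨⟨wreathR SX.R SX.i0 SY.R, ?_, Sum.inr SY.i0, ?_, ?_, ?_⟩, rfl⟩
  · -- surjectivity
    rintro (⟨a, ha⟩ | b)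
    · obtain ⟨⟨x, x'⟩, hx⟩ := SX.surj a
      simp only at hx
      refine ⟨((x, y0), (x', y0)), ?_⟩
      simp only [wreathR, hx, dif_neg ha]
    · obtain ⟨⟨y, y'⟩, hy⟩ := SY.surj b
      simp only at hy
      refine ⟨((x0, y), (x0, y')), ?_⟩
      have : SX.R x0 x0 = SX.i0 := (SX.ident _ _).mpr rfl
      simp [wreathR, this, hy]
  · -- ident
    intro p q
    simp only [wreathR]
    by_cases h : SX.R p.1 q.1 = SX.i0
    · have hx : p.1 = q.1 ↔ True := by simp [← SX.ident p.1 q.1, h]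
      simp [h, SY.ident, Prod.ext_iff, hx]
    · rw [dif_neg h]
      refine iff_of_false (by simp) fun hpq => ?_
      exact h (hpq ▸ (SX.ident _ _).mpr rfl)
  · -- symm
    have h0 : ∀ u v : X, SX.R u v = SX.i0 ↔ SX.R v u = SX.i0 := by
      intro u v; rw [SX.ident, SX.ident, eq_comm]
    rintro (⟨a, ha⟩ | b)
    · obtain ⟨a', hA⟩ := SX.symm a
      have ha' : a' ≠ SX.i0 := by
        intro h
        obtain ⟨⟨x, x'⟩, hx⟩ := SX.surj a
        simp only at hx
        have h1 : SX.R x' x = SX.i0 := h ▸ (hA x x').mp hx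
        have h2 : x' = x := (SX.ident _ _).mp h1
        have h3 : SX.R x x' = SX.i0 := (SX.ident _ _).mpr h2.symm
        exact ha (hx.symm.trans h3)
      refine ⟨Sum.inl ⟨a', ha'⟩, fun p q => ?_⟩
      simp only [wreathR]
      by_cases h1 : SX.R p.1 q.1 = SX.i0
      · have h2 : SX.R q.1 p.1 = SX.i0 := (h0 _ _).mp h1
        simp [h1, h2]
      · have h2 : ¬ SX.R q.1 p.1 = SX.i0 := fun hh => h1 ((h0 _ _).mpr hh)
        simp [dif_neg h1, dif_neg h2, Subtype.ext_iff, hA p.1 q.1]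
    · obtain ⟨b', hB⟩ := SY.symm b
      refine ⟨Sum.inr b', fun p q => ?_⟩
      simp only [wreathR]
      by_cases h1 : SX.R p.1 q.1 = SX.i0
      · have h2 : SX.R q.1 p.1 = SX.i0 := (h0 _ _).mp h1
        simp [h1, h2, hB p.2 q.2]
      · have h2 : ¬ SX.R q.1 p.1 = SX.i0 := fun hh => h1 ((h0 _ _).mpr hh)
        simp [dif_neg h1, dif_neg h2]
  · -- closed
    rintro (a | a) (b | b)
    · -- inl inl
      obtain ⟨c, hc⟩ := SX.closed a.1 b.1
      set n : ℂ := (Fintype.card Y : ℂ)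
      refine ⟨Sum.elim (fun k => n * c k.1) (fun _ => n * c SX.i0), ?_⟩
      rw [wreath_combo, adjMat_wreath_inl, adjMat_wreath_inl,
        ← Matrix.mul_kronecker_mul, hc, JJ_mul_JJ]
      simp only [Sum.elim_inl, Sum.elim_inr]
      rw [kron_sum_left]
      have key : ∀ k : IX, (c k • adjMat SX.R k) ⊗ₖ ((Fintype.card Y : ℂ) • JJ Y)
          = (n * c k) • (adjMat SX.R k ⊗ₖ JJ Y) := by
        intro k
        rw [Matrix.smul_kronecker, Matrix.kronecker_smul, smul_smul, mul_comm]
      simp only [key]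
      rw [Fintype.sum_eq_add_sum_compl SX.i0 (fun k => (n * c k) • (adjMat SX.R k ⊗ₖ JJ Y))]
      rw [add_comm]
      congr 1
      · exact Finset.sum_subtype _ (fun x => by simp) _
      · have hJ : JJ Y = ∑ j : IY, adjMat SY.R j := (sum_adjMat SY).symm
        rw [hJ, kron_sum_right, Finset.smul_sum]
    · -- inl inr
      obtain ⟨k, hk⟩ := JJ_mul_adjMat SY b
      refine ⟨Sum.elim (fun k' => if k' = a then k else 0) 0, ?_⟩
      rw [wreath_combo, adjMat_wreath_inl, adjMat_wreath_inr,
        ← Matrix.mul_kronecker_mul, hk, adjMat_i0, mul_one, Matrix.kronecker_smul]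
      simp only [Sum.elim_inl, Sum.elim_inr, Pi.zero_apply, zero_smul,
        Finset.sum_const_zero, add_zero, ite_smul]
      rw [Finset.sum_ite_eq' Finset.univ a
        (fun x : {i : IX // i ≠ SX.i0} => k • (adjMat SX.R x.1 ⊗ₖ JJ Y))]
      simp
    · -- inr inl
      obtain ⟨k, hk⟩ := adjMat_mul_JJ SY a
      refine ⟨Sum.elim (fun k' => if k' = b then k else 0) 0, ?_⟩
      rw [wreath_combo, adjMat_wreath_inr, adjMat_wreath_inl,
        ← Matrix.mul_kronecker_mul, hk, adjMat_i0, one_mul, Matrix.kronecker_smul]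
      simp only [Sum.elim_inl, Sum.elim_inr, Pi.zero_apply, zero_smul,
        Finset.sum_const_zero, add_zero, ite_smul]
      rw [Finset.sum_ite_eq' Finset.univ b
        (fun x : {i : IX // i ≠ SX.i0} => k • (adjMat SX.R x.1 ⊗ₖ JJ Y))]
      simp
    · -- inr inr
      obtain ⟨c, hc⟩ := SY.closed a b
      refine ⟨Sum.elim 0 c, ?_⟩
      rw [wreath_combo, adjMat_wreath_inr, adjMat_wreath_inr,
        ← Matrix.mul_kronecker_mul, hc]
      have h1 : adjMat SX.R SX.i0 * adjMat SX.R SX.i0 = adjMat SX.R SX.i0 := by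
        rw [adjMat_i0]; simp
      rw [h1, kron_sum_right]
      simp only [Sum.elim_inl, Sum.elim_inr, Pi.zero_apply, zero_smul,
        Finset.sum_const_zero, zero_add, Matrix.kronecker_smul]
end

section
/- If X and Y are commutative association schemes with primitive idempotents {E_{j_X}} and {E_{j_Y}} respectively, then the primitive idempotents of X ⋏ Y are exactly E_{j_X} ⊗ (1/#Y) J for j_X ∈ J_X, and I ⊗ E_{j_Y} for j_Y ∈ J_Y with j_Y ≠ j_0; in particular J(X ⋏ Y) is in bijection with J_X ⊔ (J_Y \ {j_0}). -/
open Matrix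

/-- The Bose–Mesner algebra of a relation map, as the `ℂ`-span of the
adjacency matrices. -/
noncomputable def bmAlg {Z K : Type*} [Fintype Z] [DecidableEq K] (R : Z → Z → K) :
    Submodule ℂ (Matrix Z Z ℂ) :=
  Submodule.span ℂ (Set.range (adjMat R))

/-- `E` is a primitive idempotent of the (commutative) algebra spanned by `M`:
a nonzero idempotent of `M` below which the only idempotents of `M` are `0`
and `E` itself. -/
def IsPrimIdem {Z : Type*} [Fintype Z] (M : Submodule ℂ (Matrix Z Z ℂ))
    (E : Matrix Z Z ℂ) : Prop :=
  E ∈ M ∧ E * E = E ∧ E ≠ 0 ∧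
    ∀ F ∈ M, F * F = F → E * F = F → F = 0 ∨ F = E

open Kronecker

namespace WreathAux

open Matrix Kronecker

/-- The all-ones matrix. -/
def Jm (Z : Type*) : Matrix Z Z ℂ := Matrix.of fun _ _ => (1 : ℂ)

section General

variable {Z K : Type*} [Fintype Z] [Fintype K] [DecidableEq Z] [DecidableEq K]
  (S : AssocScheme Z K)

lemma adj_mem (i : K) : adjMat S.R i ∈ bmAlg S.R :=
  Submodule.subset_span ⟨i, rfl⟩

lemma sum_adj : ∑ i, adjMat S.R i = Jm Z := by
  ext x y
  simp only [Matrix.sum_apply, Jm, Matrix.of_apply]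
  change (∑ i, if S.R x y = i then (1:ℂ) else 0) = 1
  simp [Finset.sum_ite_eq]

lemma Jm_mem : Jm Z ∈ bmAlg S.R := by
  rw [← sum_adj S]
  exact Submodule.sum_mem _ fun i _ => adj_mem S i

lemma adj_i0 : adjMat S.R S.i0 = 1 := by
  ext x y
  simp only [adjMat, Matrix.one_apply, S.ident]

lemma one_mem : (1 : Matrix Z Z ℂ) ∈ bmAlg S.R := by
  rw [← adj_i0 S]; exact adj_mem S S.i0

/-- Each adjacency matrix has constant row sums (an eigenvector argument). -/
lemma adj_mul_Jm (i : K) : ∃ c : ℂ, adjMat S.R i * Jm Z = c • Jm Z := by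
  obtain ⟨i', hi'⟩ := S.symm i
  obtain ⟨c, hc⟩ := S.closed i i'
  refine ⟨c S.i0, ?_⟩
  have key : ∀ x : Z, (∑ z, adjMat S.R i x z) = c S.i0 := by
    intro x
    have h1 := congrFun (congrFun hc x) x
    have hL : (adjMat S.R i * adjMat S.R i') x x = ∑ z, adjMat S.R i x z := by
      simp only [Matrix.mul_apply, adjMat]
      refine Finset.sum_congr rfl fun z _ => ?_
      by_cases h : S.R x z = i
      · simp [h, (hi' x z).mp h]
      · simp [h]
    have hxx : S.R x x = S.i0 := (S.ident x x).mpr rfl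
    have hR : (∑ k, c k • adjMat S.R k) x x = c S.i0 := by
      simp only [Matrix.sum_apply, Matrix.smul_apply, adjMat, smul_eq_mul, hxx]
      simp [Finset.sum_ite_eq, eq_comm]
    rw [← hL, h1, hR]
  ext x y
  simp only [Matrix.mul_apply, Jm, Matrix.smul_apply, Matrix.of_apply, smul_eq_mul, mul_one]
  exact key x

lemma mul_mem' {M N : Matrix Z Z ℂ} (hM : M ∈ bmAlg S.R) (hN : N ∈ bmAlg S.R) :
    M * N ∈ bmAlg S.R := by
  have hgen : ∀ i : K, ∀ N ∈ bmAlg S.R, adjMat S.R i * N ∈ bmAlg S.R := by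
    intro i N hN
    refine Submodule.span_induction (p := fun N _ => adjMat S.R i * N ∈ bmAlg S.R)
      ?_ ?_ ?_ ?_ hN
    · rintro _ ⟨j, rfl⟩
      obtain ⟨c, hc⟩ := S.closed i j
      rw [hc]
      exact Submodule.sum_mem _ fun k _ => Submodule.smul_mem _ _ (adj_mem S k)
    · simp
    · intro x y _ _ hx hy
      rw [mul_add]; exact Submodule.add_mem _ hx hy
    · intro a x _ hx
      rw [Matrix.mul_smul]; exact Submodule.smul_mem _ _ hx
  refine Submodule.span_induction (p := fun M _ => M * N ∈ bmAlg S.R) ?_ ?_ ?_ ?_ hM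
  · rintro _ ⟨i, rfl⟩; exact hgen i N hN
  · simp
  · intro x y _ _ hx hy; rw [add_mul]; exact Submodule.add_mem _ hx hy
  · intro a x _ hx; rw [Matrix.smul_mul]; exact Submodule.smul_mem _ _ hx

variable (hc : ∀ i j : K, adjMat S.R i * adjMat S.R j = adjMat S.R j * adjMat S.R i)
include hc

lemma comm' {M N : Matrix Z Z ℂ} (hM : M ∈ bmAlg S.R) (hN : N ∈ bmAlg S.R) :
    M * N = N * M := by
  have hgen : ∀ i : K, ∀ N ∈ bmAlg S.R,
      adjMat S.R i * N = N * adjMat S.R i := by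
    intro i N hN
    refine Submodule.span_induction (p := fun N _ => adjMat S.R i * N = N * adjMat S.R i)
      ?_ ?_ ?_ ?_ hN
    · rintro _ ⟨j, rfl⟩; exact hc i j
    · simp
    · intro x y _ _ hx hy; rw [mul_add, add_mul, hx, hy]
    · intro a x _ hx; rw [Matrix.mul_smul, Matrix.smul_mul, hx]
  refine Submodule.span_induction (p := fun M _ => M * N = N * M) ?_ ?_ ?_ ?_ hM
  · rintro _ ⟨i, rfl⟩; exact hgen i N hN
  · simp
  · intro x y _ _ hx hy; rw [add_mul, mul_add, hx, hy]
  · intro a x _ hx; rw [Matrix.smul_mul, Matrix.mul_smul, hx]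

omit hc

lemma valence {M : Matrix Z Z ℂ} (hM : M ∈ bmAlg S.R) :
    ∃ θ : ℂ, M * Jm Z = θ • Jm Z := by
  refine Submodule.span_induction (p := fun M _ => ∃ θ : ℂ, M * Jm Z = θ • Jm Z)
    ?_ ?_ ?_ ?_ hM
  · rintro _ ⟨i, rfl⟩; exact adj_mul_Jm S i
  · exact ⟨0, by simp⟩
  · rintro x y _ _ ⟨θ₁, h₁⟩ ⟨θ₂, h₂⟩
    exact ⟨θ₁ + θ₂, by rw [add_mul, h₁, h₂, add_smul]⟩
  · rintro a x _ ⟨θ, h⟩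
    exact ⟨a * θ, by rw [Matrix.smul_mul, h, smul_smul]⟩

lemma Jm_mul_Jm : Jm Z * Jm Z = (Fintype.card Z : ℂ) • Jm Z := by
  ext x y
  simp [Jm, Matrix.mul_apply]

end General

section E0

variable {Z K : Type*} [Fintype Z] [Fintype K] [DecidableEq Z] [DecidableEq K]
  (S : AssocScheme Z K)

/-- The principal idempotent `(1/#Z) J`. -/
noncomputable def E0 (Z : Type*) [Fintype Z] : Matrix Z Z ℂ :=
  (Fintype.card Z : ℂ)⁻¹ • Matrix.of fun _ _ : Z => (1 : ℂ)

lemma E0_eq : E0 Z = (Fintype.card Z : ℂ)⁻¹ • Jm Z := rfl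

variable [Nonempty Z]

lemma cardZ_ne : (Fintype.card Z : ℂ) ≠ 0 := by
  exact_mod_cast Nat.cast_ne_zero.mpr Fintype.card_ne_zero

lemma E0_mem : E0 Z ∈ bmAlg S.R :=
  Submodule.smul_mem _ _ (Jm_mem S)

lemma E0_idem : E0 Z * E0 Z = E0 Z := by
  rw [E0_eq, Matrix.smul_mul, Matrix.mul_smul, Jm_mul_Jm, smul_smul, smul_smul,
    mul_assoc, inv_mul_cancel₀ (cardZ_ne (Z := Z)), mul_one]

lemma E0_ne_zero : E0 Z ≠ 0 := by
  intro h
  have := congrFun (congrFun h (Classical.arbitrary Z)) (Classical.arbitrary Z)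
  simp only [E0, Matrix.smul_apply, Matrix.of_apply, smul_eq_mul, mul_one,
    Matrix.zero_apply] at this
  exact inv_ne_zero (cardZ_ne (Z := Z)) this

lemma valence_E0 {M : Matrix Z Z ℂ} (hM : M ∈ bmAlg S.R) :
    ∃ θ : ℂ, M * E0 Z = θ • E0 Z := by
  obtain ⟨θ, h⟩ := valence S hM
  exact ⟨θ, by rw [E0_eq, Matrix.mul_smul, h, smul_comm]⟩

variable (hc : ∀ i j : K, adjMat S.R i * adjMat S.R j = adjMat S.R j * adjMat S.R i)

include hc in
/-- `E0` is a primitive idempotent. -/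
lemma E0_prim : IsPrimIdem (bmAlg S.R) (E0 Z) := by
  refine ⟨E0_mem S, E0_idem, E0_ne_zero, ?_⟩
  intro F hF hFF hEF
  obtain ⟨θ, hθ⟩ := valence_E0 S hF
  have hFθ : F = θ • E0 Z := by
    rw [← hEF, comm' S hc (E0_mem S) hF, hθ]
  have h2 : θ • θ • E0 Z = θ • E0 Z := by
    calc θ • θ • E0 Z = (θ • E0 Z) * (θ • E0 Z) := by
          rw [Matrix.smul_mul, Matrix.mul_smul, E0_idem]
      _ = F * F := by rw [← hFθ]
      _ = F := hFF
      _ = θ • E0 Z := hFθ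
  have : (θ * θ - θ) • E0 Z = 0 := by
    rw [sub_smul, ← smul_smul, h2, sub_self]
  rcases smul_eq_zero.mp this with h | h
  · have : θ * (θ - 1) = 0 := by ring_nf; linear_combination h
    rcases mul_eq_zero.mp this with h' | h'
    · left; rw [hFθ, h', zero_smul]
    · right; rw [hFθ, sub_eq_zero.mp h', one_smul]
  · exact absurd h E0_ne_zero

/-- A primitive idempotent distinct from `E0` is orthogonal to `E0`. -/
lemma prim_ne_E0_orth {E : Matrix Z Z ℂ} (hE : IsPrimIdem (bmAlg S.R) E)
    (hne : E ≠ E0 Z) : E * E0 Z = 0 := by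
  obtain ⟨hmem, hidem, hne0, hprim⟩ := hE
  obtain ⟨θ, hθ⟩ := valence_E0 S hmem
  have h2 : θ • E0 Z = (θ * θ) • E0 Z := by
    calc θ • E0 Z = E * E0 Z := hθ.symm
      _ = (E * E) * E0 Z := by rw [hidem]
      _ = E * (θ • E0 Z) := by rw [mul_assoc, hθ]
      _ = θ • (θ • E0 Z) := by rw [Matrix.mul_smul, hθ]
      _ = (θ * θ) • E0 Z := by rw [smul_smul]
  have hθθ : (θ - θ * θ) • E0 Z = 0 := by rw [sub_smul, h2, sub_self]
  have hq : θ - θ * θ = 0 := by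
    rcases smul_eq_zero.mp hθθ with h | h
    · exact h
    · exact absurd h E0_ne_zero
  have hθ01 : θ = 0 ∨ θ = 1 := by
    have : θ * (1 - θ) = 0 := by linear_combination hq
    rcases mul_eq_zero.mp this with h | h
    · exact Or.inl h
    · exact Or.inr (by linear_combination -h)
  rcases hθ01 with h | h
  · rw [hθ, h, zero_smul]
  · exfalso
    have hEE0 : E * E0 Z = E0 Z := by rw [hθ, h, one_smul]
    rcases hprim (E0 Z) (E0_mem S) E0_idem hEE0 with h' | h'
    · exact E0_ne_zero h'
    · exact hne h'.symm

end E0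

section Wreath

open Kronecker

variable {X Y IX IY : Type*}
    [Fintype X] [Fintype Y] [Fintype IX] [Fintype IY]
    [DecidableEq X] [DecidableEq Y] [DecidableEq IX] [DecidableEq IY]
    (SX : AssocScheme X IX) (SY : AssocScheme Y IY)

local notation "W" => wreathR SX.R SX.i0 SY.R

lemma gW_inl (i : IX) (h : i ≠ SX.i0) :
    adjMat W (Sum.inl ⟨i, h⟩) = adjMat SX.R i ⊗ₖ Jm Y := by
  ext ⟨x, y⟩ ⟨x', y'⟩
  show (if wreathR SX.R SX.i0 SY.R (x, y) (x', y') = Sum.inl ⟨i, h⟩ then (1:ℂ) else 0)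
      = (if SX.R x x' = i then (1:ℂ) else 0) * 1
  rw [mul_one]
  unfold wreathR
  by_cases h0 : SX.R x x' = SX.i0
  · rw [dif_pos h0, if_neg (by simp), if_neg (fun hh => h (hh.symm.trans h0))]
  · rw [dif_neg h0]
    by_cases h1 : SX.R x x' = i
    · rw [if_pos (by simp [h1]), if_pos h1]
    · rw [if_neg (fun hh => h1 (congrArg Subtype.val (Sum.inl.inj hh))), if_neg h1]

lemma gW_inr (j : IY) :
    adjMat W (Sum.inr j) = (1 : Matrix X X ℂ) ⊗ₖ adjMat SY.R j := by
  ext ⟨x, y⟩ ⟨x', y'⟩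
  show (if wreathR SX.R SX.i0 SY.R (x, y) (x', y') = Sum.inr j then (1:ℂ) else 0)
      = (1 : Matrix X X ℂ) x x' * (if SY.R y y' = j then (1:ℂ) else 0)
  unfold wreathR
  by_cases h0 : SX.R x x' = SX.i0
  · have hx : x = x' := (SX.ident x x').mp h0
    rw [dif_pos h0, show (1 : Matrix X X ℂ) x x' = 1 from hx ▸ Matrix.one_apply_eq x,
      one_mul]
    by_cases h1 : SY.R y y' = j
    · rw [if_pos (by rw [h1]), if_pos h1]
    · rw [if_neg (fun hh => h1 (Sum.inr.inj hh)), if_neg h1]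
  · have hx : x ≠ x' := fun hh => h0 ((SX.ident x x').mpr hh)
    rw [dif_neg h0, if_neg (by simp), Matrix.one_apply_ne hx, zero_mul]

lemma kron_sum_right (A : Matrix X X ℂ) (f : IY → Matrix Y Y ℂ) :
    A ⊗ₖ (∑ j, f j) = ∑ j, A ⊗ₖ f j := by
  ext ⟨x, y⟩ ⟨x', y'⟩
  simp [Matrix.kronecker_apply, Matrix.sum_apply, Finset.mul_sum]

lemma kron_J_mem {A : Matrix X X ℂ} (hA : A ∈ bmAlg SX.R) :
    A ⊗ₖ Jm Y ∈ bmAlg W := by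
  refine Submodule.span_induction (p := fun A _ => A ⊗ₖ Jm Y ∈ bmAlg W) ?_ ?_ ?_ ?_ hA
  · rintro _ ⟨i, rfl⟩
    by_cases h : i = SX.i0
    · subst h
      rw [adj_i0 SX]
      have : (1 : Matrix X X ℂ) ⊗ₖ Jm Y = ∑ j : IY, adjMat W (Sum.inr j) := by
        rw [← sum_adj SY, kron_sum_right]
        exact Finset.sum_congr rfl fun j _ => (gW_inr SX SY j).symm
      rw [this]
      exact Submodule.sum_mem _ fun j _ => Submodule.subset_span ⟨Sum.inr j, rfl⟩
    · rw [← gW_inl SX SY i h]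
      exact Submodule.subset_span ⟨Sum.inl ⟨i, h⟩, rfl⟩
  · simp only [Matrix.zero_kronecker]; exact Submodule.zero_mem _
  · intro A B _ _ hA hB
    rw [Matrix.add_kronecker]; exact Submodule.add_mem _ hA hB
  · intro a A _ hA
    rw [Matrix.smul_kronecker]; exact Submodule.smul_mem _ _ hA

lemma one_kron_mem {B : Matrix Y Y ℂ} (hB : B ∈ bmAlg SY.R) :
    (1 : Matrix X X ℂ) ⊗ₖ B ∈ bmAlg W := by
  refine Submodule.span_induction (p := fun B _ => (1 : Matrix X X ℂ) ⊗ₖ B ∈ bmAlg W)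
    ?_ ?_ ?_ ?_ hB
  · rintro _ ⟨j, rfl⟩
    rw [← gW_inr SX SY j]
    exact Submodule.subset_span ⟨Sum.inr j, rfl⟩
  · simp only [Matrix.kronecker_zero]; exact Submodule.zero_mem _
  · intro A B _ _ hA hB
    rw [Matrix.kronecker_add]; exact Submodule.add_mem _ hA hB
  · intro a B _ hB
    rw [Matrix.kronecker_smul]; exact Submodule.smul_mem _ _ hB

lemma wreath_structure {M : Matrix (X × Y) (X × Y) ℂ} (hM : M ∈ bmAlg W) :
    ∃ A ∈ bmAlg SX.R, ∃ B ∈ bmAlg SY.R, M = A ⊗ₖ Jm Y + (1 : Matrix X X ℂ) ⊗ₖ B := by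
  refine Submodule.span_induction (p := fun M _ => ∃ A ∈ bmAlg SX.R, ∃ B ∈ bmAlg SY.R,
    M = A ⊗ₖ Jm Y + (1 : Matrix X X ℂ) ⊗ₖ B) ?_ ?_ ?_ ?_ hM
  · rintro _ ⟨(⟨i, h⟩ | j), rfl⟩
    · exact ⟨adjMat SX.R i, adj_mem SX i, 0, Submodule.zero_mem _, by
        rw [gW_inl SX SY i h, Matrix.kronecker_zero, add_zero]⟩
    · exact ⟨0, Submodule.zero_mem _, adjMat SY.R j, adj_mem SY j, by
        rw [gW_inr SX SY j, Matrix.zero_kronecker, zero_add]⟩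
  · exact ⟨0, Submodule.zero_mem _, 0, Submodule.zero_mem _, by simp⟩
  · rintro M N _ _ ⟨A, hA, B, hB, rfl⟩ ⟨A', hA', B', hB', rfl⟩
    exact ⟨A + A', Submodule.add_mem _ hA hA', B + B', Submodule.add_mem _ hB hB', by
      rw [Matrix.add_kronecker, Matrix.kronecker_add]; abel⟩
  · rintro a M _ ⟨A, hA, B, hB, rfl⟩
    exact ⟨a • A, Submodule.smul_mem _ _ hA, a • B, Submodule.smul_mem _ _ hB, by
      rw [Matrix.smul_kronecker, Matrix.kronecker_smul, smul_add]⟩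

lemma kron_sub_right (A : Matrix X X ℂ) (B B' : Matrix Y Y ℂ) :
    A ⊗ₖ (B - B') = A ⊗ₖ B - A ⊗ₖ B' := by
  ext ⟨x, y⟩ ⟨x', y'⟩
  simp [Matrix.kronecker_apply, mul_sub]

lemma scheme_nonempty {Z K : Type*} [Fintype Z] [Fintype K] [DecidableEq Z] [DecidableEq K]
    (S : AssocScheme Z K) : Nonempty Z := by
  obtain ⟨p, -⟩ := S.surj S.i0
  exact ⟨p.1⟩

section Inj

variable [Nonempty X] [Nonempty Y]

lemma kronE0_inj {A A' : Matrix X X ℂ} (h : A ⊗ₖ E0 Y = A' ⊗ₖ E0 Y) : A = A' := by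
  ext x x'
  have y0 : Y := Classical.arbitrary Y
  have := congrFun (congrFun h (x, y0)) (x', y0)
  simp only [Matrix.kronecker_apply, E0, Matrix.smul_apply, Matrix.of_apply,
    smul_eq_mul, mul_one] at this
  exact mul_right_cancel₀ (inv_ne_zero (cardZ_ne (Z := Y))) this

lemma oneKron_inj {B B' : Matrix Y Y ℂ}
    (h : (1 : Matrix X X ℂ) ⊗ₖ B = (1 : Matrix X X ℂ) ⊗ₖ B') : B = B' := by
  ext y y'
  have x0 : X := Classical.arbitrary X
  have := congrFun (congrFun h (x0, y)) (x0, y')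
  simpa [Matrix.kronecker_apply] using this

end Inj

section Decomp

variable [Nonempty Y]

lemma Jm_eq_card_smul_E0 : Jm Y = (Fintype.card Y : ℂ) • E0 Y := by
  rw [E0_eq, smul_smul, mul_inv_cancel₀ (cardZ_ne (Z := Y)), one_smul]

lemma Jm_mul_E0 : Jm Y * E0 Y = Jm Y := by
  rw [E0_eq, Matrix.mul_smul, Jm_mul_Jm, smul_smul,
    inv_mul_cancel₀ (cardZ_ne (Z := Y)), one_smul]

lemma decompPQ {M : Matrix (X × Y) (X × Y) ℂ} (hM : M ∈ bmAlg W) :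
    ∃ Ah ∈ bmAlg SX.R, ∃ Bh ∈ bmAlg SY.R,
      M * ((1 : Matrix X X ℂ) ⊗ₖ E0 Y) = Ah ⊗ₖ E0 Y ∧
      M = Ah ⊗ₖ E0 Y + (1 : Matrix X X ℂ) ⊗ₖ Bh ∧
      Bh * E0 Y = 0 := by
  obtain ⟨A, hA, B, hB, rfl⟩ := wreath_structure SX SY hM
  obtain ⟨θ, hθ⟩ := valence SY hB
  have hBE : B * E0 Y = θ • E0 Y := by
    rw [E0_eq, Matrix.mul_smul, hθ, smul_comm, ← E0_eq]
  refine ⟨(Fintype.card Y : ℂ) • A + θ • 1, ?_, B - θ • E0 Y, ?_, ?_, ?_, ?_⟩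
  · exact Submodule.add_mem _ (Submodule.smul_mem _ _ hA)
      (Submodule.smul_mem _ _ (one_mem SX))
  · exact Submodule.sub_mem _ hB (Submodule.smul_mem _ _ (E0_mem SY))
  · rw [add_mul, ← Matrix.mul_kronecker_mul, ← Matrix.mul_kronecker_mul,
      mul_one, one_mul, Jm_mul_E0, hBE, Jm_eq_card_smul_E0,
      Matrix.kronecker_smul, Matrix.kronecker_smul, Matrix.add_kronecker,
      Matrix.smul_kronecker, Matrix.smul_kronecker]
  · rw [Matrix.add_kronecker, Matrix.smul_kronecker, Matrix.smul_kronecker,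
      kron_sub_right, Matrix.kronecker_smul, Jm_eq_card_smul_E0,
      Matrix.kronecker_smul]
    abel
  · rw [Matrix.sub_mul, hBE, Matrix.smul_mul, E0_idem, sub_self]

lemma decomp_unique [Nonempty X] {A A' : Matrix X X ℂ} {B B' : Matrix Y Y ℂ}
    (hB : B * E0 Y = 0) (hB' : B' * E0 Y = 0)
    (h : A ⊗ₖ E0 Y + (1 : Matrix X X ℂ) ⊗ₖ B
        = A' ⊗ₖ E0 Y + (1 : Matrix X X ℂ) ⊗ₖ B') : A = A' ∧ B = B' := by
  have h2 := congrArg (· * ((1 : Matrix X X ℂ) ⊗ₖ E0 Y)) h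
  simp only [add_mul, ← Matrix.mul_kronecker_mul, mul_one, one_mul, E0_idem,
    hB, hB', Matrix.kronecker_zero, add_zero] at h2
  have hAA : A = A' := kronE0_inj h2
  subst hAA
  exact ⟨rfl, oneKron_inj (by rwa [add_right_inj] at h)⟩

end Decomp

end Wreath

end WreathAux
open WreathAux

/-- For commutative association schemes `X`, `Y`, the primitive idempotents of
`X ⋏ Y` are exactly `E_{j_X} ⊗ (1/#Y)J` for `j_X ∈ J_X` and `I ⊗ E_{j_Y}` for
`j_Y ∈ J_Y`, `j_Y ≠ j₀`; in particular `J(X ⋏ Y)` is in bijection with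
`J_X ⊔ (J_Y \ {j₀})`. -/
theorem wreath_primIdem {X Y IX IY : Type*}
    [Fintype X] [Fintype Y] [Fintype IX] [Fintype IY]
    [DecidableEq X] [DecidableEq Y] [DecidableEq IX] [DecidableEq IY]
    (SX : AssocScheme X IX) (SY : AssocScheme Y IY)
    (hcX : ∀ i j : IX, adjMat SX.R i * adjMat SX.R j = adjMat SX.R j * adjMat SX.R i)
    (hcY : ∀ i j : IY, adjMat SY.R i * adjMat SY.R j = adjMat SY.R j * adjMat SY.R i) :
    (∀ E : Matrix (X × Y) (X × Y) ℂ,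
      IsPrimIdem (bmAlg (wreathR SX.R SX.i0 SY.R)) E ↔
        ((∃ EX : Matrix X X ℂ, IsPrimIdem (bmAlg SX.R) EX ∧
            E = EX ⊗ₖ ((Fintype.card Y : ℂ)⁻¹ • Matrix.of fun _ _ : Y => (1 : ℂ))) ∨
         (∃ EY : Matrix Y Y ℂ, IsPrimIdem (bmAlg SY.R) EY ∧
            EY ≠ (Fintype.card Y : ℂ)⁻¹ • Matrix.of (fun _ _ : Y => (1 : ℂ)) ∧
            E = (1 : Matrix X X ℂ) ⊗ₖ EY))) ∧
    Nonempty ({E : Matrix (X × Y) (X × Y) ℂ //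
        IsPrimIdem (bmAlg (wreathR SX.R SX.i0 SY.R)) E} ≃
      ({EX : Matrix X X ℂ // IsPrimIdem (bmAlg SX.R) EX} ⊕
       {EY : Matrix Y Y ℂ // IsPrimIdem (bmAlg SY.R) EY ∧
          EY ≠ (Fintype.card Y : ℂ)⁻¹ • Matrix.of (fun _ _ : Y => (1 : ℂ))})) := by
  classical
  haveI : Nonempty X := scheme_nonempty SX
  haveI : Nonempty Y := scheme_nonempty SY
  have hE0Y : ((Fintype.card Y : ℂ)⁻¹ • Matrix.of fun _ _ : Y => (1 : ℂ)) = E0 Y := rfl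
  have hE0mem : E0 Y ∈ bmAlg SY.R := E0_mem SY
  have hE0idem : E0 Y * E0 Y = E0 Y := E0_idem
  have hE0ne : E0 Y ≠ 0 := E0_ne_zero
  -- membership of `A ⊗ₖ E0 Y` in the wreath algebra
  have hkE0mem : ∀ {A : Matrix X X ℂ}, A ∈ bmAlg SX.R →
      A ⊗ₖ E0 Y ∈ bmAlg (wreathR SX.R SX.i0 SY.R) := by
    intro A hA
    rw [E0_eq, Matrix.kronecker_smul]
    exact Submodule.smul_mem _ _ (kron_J_mem SX SY hA)
  have hiff : ∀ E : Matrix (X × Y) (X × Y) ℂ,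
      IsPrimIdem (bmAlg (wreathR SX.R SX.i0 SY.R)) E ↔
        ((∃ EX : Matrix X X ℂ, IsPrimIdem (bmAlg SX.R) EX ∧
            E = EX ⊗ₖ ((Fintype.card Y : ℂ)⁻¹ • Matrix.of fun _ _ : Y => (1 : ℂ))) ∨
         (∃ EY : Matrix Y Y ℂ, IsPrimIdem (bmAlg SY.R) EY ∧
            EY ≠ (Fintype.card Y : ℂ)⁻¹ • Matrix.of (fun _ _ : Y => (1 : ℂ)) ∧
            E = (1 : Matrix X X ℂ) ⊗ₖ EY)) := by
    intro E
    rw [hE0Y]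
    constructor
    · rintro ⟨hEmem, hEE, hEne, hEprim⟩
      obtain ⟨Ah, hAh, Bh, hBh, hEP, hEdec, hBhE0⟩ := decompPQ SX SY hEmem
      have hcross : E0 Y * Bh = 0 := by
        rw [comm' SY hcY hE0mem hBh, hBhE0]
      have hBh2E0 : (Bh * Bh) * E0 Y = 0 := by rw [mul_assoc, hBhE0, mul_zero]
      have hsq : (Ah * Ah) ⊗ₖ E0 Y + (1 : Matrix X X ℂ) ⊗ₖ (Bh * Bh)
          = Ah ⊗ₖ E0 Y + (1 : Matrix X X ℂ) ⊗ₖ Bh := by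
        calc (Ah * Ah) ⊗ₖ E0 Y + (1 : Matrix X X ℂ) ⊗ₖ (Bh * Bh) = E * E := by
              rw [hEdec, add_mul, mul_add, mul_add,
                ← Matrix.mul_kronecker_mul, ← Matrix.mul_kronecker_mul,
                ← Matrix.mul_kronecker_mul, ← Matrix.mul_kronecker_mul,
                hE0idem, hcross, hBhE0]
              simp only [one_mul, mul_one, Matrix.kronecker_zero, add_zero, zero_add]
          _ = E := hEE
          _ = _ := hEdec
      obtain ⟨hAh2, hBh2⟩ := decomp_unique hBh2E0 hBhE0 hsq
      set F : Matrix (X × Y) (X × Y) ℂ := Ah ⊗ₖ E0 Y with hF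
      set G : Matrix (X × Y) (X × Y) ℂ := (1 : Matrix X X ℂ) ⊗ₖ Bh with hG
      have hFmem : F ∈ bmAlg (wreathR SX.R SX.i0 SY.R) := hkE0mem hAh
      have hGmem : G ∈ bmAlg (wreathR SX.R SX.i0 SY.R) := one_kron_mem SX SY hBh
      have hFF : F * F = F := by
        rw [hF, ← Matrix.mul_kronecker_mul, hAh2, hE0idem]
      have hGG : G * G = G := by
        rw [hG, ← Matrix.mul_kronecker_mul, hBh2, one_mul]
      have hEF : E * F = F := by
        rw [hEdec, hF, add_mul, ← Matrix.mul_kronecker_mul,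
          ← Matrix.mul_kronecker_mul, hE0idem, hAh2, one_mul, hBhE0,
          Matrix.kronecker_zero, add_zero]
      have hEG : E * G = G := by
        rw [hEdec, hG, add_mul, ← Matrix.mul_kronecker_mul,
          ← Matrix.mul_kronecker_mul, hcross, hBh2, mul_one, one_mul,
          Matrix.kronecker_zero, zero_add]
      rcases hEprim F hFmem hFF hEF with hF0 | hFE
      · rcases hEprim G hGmem hGG hEG with hG0 | hGE
        · exact absurd (by rw [hEdec, hF0, hG0, add_zero]) hEne
        · -- E = G = 1 ⊗ Bh
          have hEeq : E = (1 : Matrix X X ℂ) ⊗ₖ Bh := by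
            rw [hEdec, hF0, zero_add]
          refine Or.inr ⟨Bh, ⟨hBh, hBh2, ?_, ?_⟩, ?_, hEeq⟩
          · intro h
            exact hEne (by rw [hEeq, h, Matrix.kronecker_zero])
          · intro Gm hGm hGmGm hBhGm
            have hF'mem := one_kron_mem SX SY hGm
            have hF'F' : ((1 : Matrix X X ℂ) ⊗ₖ Gm) * ((1 : Matrix X X ℂ) ⊗ₖ Gm)
                = (1 : Matrix X X ℂ) ⊗ₖ Gm := by
              rw [← Matrix.mul_kronecker_mul, hGmGm, one_mul]
            have hEF' : E * ((1 : Matrix X X ℂ) ⊗ₖ Gm) = (1 : Matrix X X ℂ) ⊗ₖ Gm := by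
              rw [hEeq, ← Matrix.mul_kronecker_mul, hBhGm, one_mul]
            rcases hEprim _ hF'mem hF'F' hEF' with h0 | hE'
            · exact Or.inl (oneKron_inj (by rw [h0, Matrix.kronecker_zero]))
            · exact Or.inr (oneKron_inj (by rw [hE', hEeq]))
          · intro h
            rw [h] at hBhE0
            rw [hE0idem] at hBhE0
            exact hE0ne hBhE0
      · -- F = E; then G = E * G and F * G = 0 forces G = 0
        have hFG : F * G = 0 := by
          rw [hF, hG, ← Matrix.mul_kronecker_mul, hcross, Matrix.kronecker_zero]
        have hG0 : G = 0 := by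
          rw [← hEG, ← hFE, hFG]
        have hEeq : E = Ah ⊗ₖ E0 Y := by
          rw [hEdec, hG0, add_zero]
        refine Or.inl ⟨Ah, ⟨hAh, hAh2, ?_, ?_⟩, hEeq⟩
        · intro h
          exact hEne (by rw [hEeq, h, Matrix.zero_kronecker])
        · intro Gm hGm hGmGm hAhGm
          have hF'mem := hkE0mem hGm
          have hF'F' : (Gm ⊗ₖ E0 Y) * (Gm ⊗ₖ E0 Y) = Gm ⊗ₖ E0 Y := by
            rw [← Matrix.mul_kronecker_mul, hGmGm, hE0idem]
          have hEF' : E * (Gm ⊗ₖ E0 Y) = Gm ⊗ₖ E0 Y := by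
            rw [hEeq, ← Matrix.mul_kronecker_mul, hAhGm, hE0idem]
          rcases hEprim _ hF'mem hF'F' hEF' with h0 | hE'
          · exact Or.inl (kronE0_inj (by rw [h0, Matrix.zero_kronecker]))
          · exact Or.inr (kronE0_inj (by rw [hE', hEeq]))
    · rintro (⟨EX, ⟨hXm, hXX, hXne, hXprim⟩, rfl⟩ | ⟨EY, ⟨hYm, hYY, hYne, hYprim⟩, hEYne, rfl⟩)
      · -- E = EX ⊗ E0Y
        refine ⟨hkE0mem hXm, ?_, ?_, ?_⟩
        · rw [← Matrix.mul_kronecker_mul, hXX, hE0idem]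
        · intro h
          exact hXne (kronE0_inj (by rw [h, Matrix.zero_kronecker]))
        · intro F hFm hFF hEF
          obtain ⟨Ah, hAh, Bh, hBh, hFP, hFdec, hBhE0⟩ := decompPQ SX SY hFm
          have hcross : E0 Y * Bh = 0 := by
            rw [comm' SY hcY hE0mem hBh, hBhE0]
          have hFeq : (EX * Ah) ⊗ₖ E0 Y + (1 : Matrix X X ℂ) ⊗ₖ (0 : Matrix Y Y ℂ)
              = Ah ⊗ₖ E0 Y + (1 : Matrix X X ℂ) ⊗ₖ Bh := by
            rw [Matrix.kronecker_zero, add_zero]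
            calc (EX * Ah) ⊗ₖ E0 Y = (EX ⊗ₖ E0 Y) * F := by
                  rw [hFdec, mul_add, ← Matrix.mul_kronecker_mul,
                    ← Matrix.mul_kronecker_mul, hE0idem, hcross, mul_one,
                    Matrix.kronecker_zero, add_zero]
              _ = F := hEF
              _ = _ := hFdec
          obtain ⟨hEA, h0B⟩ := decomp_unique (Matrix.zero_mul _) hBhE0 hFeq
          have hFeq2 : F = Ah ⊗ₖ E0 Y := by
            rw [hFdec, ← h0B, Matrix.kronecker_zero, add_zero]
          have hAh2 : Ah * Ah = Ah := by
            refine kronE0_inj (Y := Y) (A := Ah * Ah) (A' := Ah) ?_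
            rw [show (Ah * Ah) ⊗ₖ E0 Y = (Ah ⊗ₖ E0 Y) * (Ah ⊗ₖ E0 Y) from by
              rw [← Matrix.mul_kronecker_mul, hE0idem], ← hFeq2, hFF, hFeq2]
          rcases hXprim Ah hAh hAh2 hEA with h0 | hEXA
          · exact Or.inl (by rw [hFeq2, h0, Matrix.zero_kronecker])
          · exact Or.inr (by rw [hFeq2, hEXA])
      · -- E = 1 ⊗ EY
        have hEYE0 : EY * E0 Y = 0 :=
          prim_ne_E0_orth SY ⟨hYm, hYY, hYne, hYprim⟩ hEYne
        refine ⟨one_kron_mem SX SY hYm, ?_, ?_, ?_⟩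
        · rw [← Matrix.mul_kronecker_mul, hYY, one_mul]
        · intro h
          exact hYne (oneKron_inj (by rw [h, Matrix.kronecker_zero]))
        · intro F hFm hFF hEF
          obtain ⟨Ah, hAh, Bh, hBh, hFP, hFdec, hBhE0⟩ := decompPQ SX SY hFm
          have hEYBhE0 : (EY * Bh) * E0 Y = 0 := by
            rw [mul_assoc, hBhE0, mul_zero]
          have hFeq : (0 : Matrix X X ℂ) ⊗ₖ E0 Y + (1 : Matrix X X ℂ) ⊗ₖ (EY * Bh)
              = Ah ⊗ₖ E0 Y + (1 : Matrix X X ℂ) ⊗ₖ Bh := by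
            rw [Matrix.zero_kronecker, zero_add]
            calc (1 : Matrix X X ℂ) ⊗ₖ (EY * Bh) = ((1 : Matrix X X ℂ) ⊗ₖ EY) * F := by
                  rw [hFdec, mul_add, ← Matrix.mul_kronecker_mul,
                    ← Matrix.mul_kronecker_mul, hEYE0, one_mul, mul_one,
                    Matrix.kronecker_zero, zero_add]
              _ = F := hEF
              _ = _ := hFdec
          obtain ⟨h0A, hEYBh⟩ := decomp_unique hEYBhE0 hBhE0 hFeq
          have hFeq2 : F = (1 : Matrix X X ℂ) ⊗ₖ Bh := by
            rw [hFdec, ← h0A, Matrix.zero_kronecker, zero_add]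
          have hBh2 : Bh * Bh = Bh := by
            refine oneKron_inj (X := X) (B := Bh * Bh) (B' := Bh) ?_
            rw [show (1 : Matrix X X ℂ) ⊗ₖ (Bh * Bh)
                = ((1 : Matrix X X ℂ) ⊗ₖ Bh) * ((1 : Matrix X X ℂ) ⊗ₖ Bh) from by
              rw [← Matrix.mul_kronecker_mul, one_mul], ← hFeq2, hFF, hFeq2]
          rcases hYprim Bh hBh hBh2 hEYBh with h0 | hEYB
          · exact Or.inl (by rw [hFeq2, h0, Matrix.kronecker_zero])
          · exact Or.inr (by rw [hFeq2, hEYB])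
  refine ⟨hiff, ?_⟩
  -- the bijection
  have horthY : ∀ {EY : Matrix Y Y ℂ}, IsPrimIdem (bmAlg SY.R) EY →
      EY ≠ (Fintype.card Y : ℂ)⁻¹ • Matrix.of (fun _ _ : Y => (1 : ℂ)) →
      EY * E0 Y = 0 := fun hEY hne => prim_ne_E0_orth SY hEY (hE0Y ▸ hne)
  let f : ({EX : Matrix X X ℂ // IsPrimIdem (bmAlg SX.R) EX} ⊕
       {EY : Matrix Y Y ℂ // IsPrimIdem (bmAlg SY.R) EY ∧
          EY ≠ (Fintype.card Y : ℂ)⁻¹ • Matrix.of (fun _ _ : Y => (1 : ℂ))}) →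
      {E : Matrix (X × Y) (X × Y) ℂ //
        IsPrimIdem (bmAlg (wreathR SX.R SX.i0 SY.R)) E} := fun s =>
    match s with
    | .inl ⟨EX, hEX⟩ => ⟨EX ⊗ₖ ((Fintype.card Y : ℂ)⁻¹ • Matrix.of fun _ _ : Y => (1 : ℂ)),
        (hiff _).mpr (Or.inl ⟨EX, hEX, rfl⟩)⟩
    | .inr ⟨EY, hEY⟩ => ⟨(1 : Matrix X X ℂ) ⊗ₖ EY,
        (hiff _).mpr (Or.inr ⟨EY, hEY.1, hEY.2, rfl⟩)⟩
  have hdisj : ∀ (EX : Matrix X X ℂ) (EY : Matrix Y Y ℂ),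
      IsPrimIdem (bmAlg SX.R) EX →
      IsPrimIdem (bmAlg SY.R) EY →
      EY ≠ (Fintype.card Y : ℂ)⁻¹ • Matrix.of (fun _ _ : Y => (1 : ℂ)) →
      EX ⊗ₖ E0 Y ≠ (1 : Matrix X X ℂ) ⊗ₖ EY := by
    intro EX EY hEX hEY hne h
    have h2 := congrArg (· * ((1 : Matrix X X ℂ) ⊗ₖ E0 Y)) h
    simp only [← Matrix.mul_kronecker_mul, mul_one, one_mul, hE0idem,
      horthY hEY hne, Matrix.kronecker_zero] at h2
    exact hEX.2.2.1 (kronE0_inj (by rw [h2, Matrix.zero_kronecker]))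
  have hinj : Function.Injective f := by
    rintro (⟨EX, hEX⟩ | ⟨EY, hEY⟩) (⟨EX', hEX'⟩ | ⟨EY', hEY'⟩) hab <;>
      simp only [f, Subtype.mk.injEq] at hab
    · exact congrArg _ (Subtype.ext (kronE0_inj hab))
    · exact absurd hab (hdisj EX EY' hEX hEY'.1 hEY'.2)
    · exact absurd hab.symm (hdisj EX' EY hEX' hEY.1 hEY.2)
    · exact congrArg _ (Subtype.ext (oneKron_inj hab))
  have hsurj : Function.Surjective f := by
    rintro ⟨E, hE⟩
    rcases (hiff E).mp hE with ⟨EX, hEX, hEeq⟩ | ⟨EY, hEY, hne, hEeq⟩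
    · exact ⟨.inl ⟨EX, hEX⟩, Subtype.ext hEeq.symm⟩
    · exact ⟨.inr ⟨EY, hEY, hne⟩, Subtype.ext hEeq.symm⟩
  exact ⟨(Equiv.ofBijective f ⟨hinj, hsurj⟩).symm⟩
end

section
/- The first eigenmatrix of X ⋏ Y is given by: (A_{i_X} ⊗ J)(E_{j_X} ⊗ E_{j_0}) = P_{i_X}(j_X) · #Y · (E_{j_X} ⊗ E_{j_0}); (I ⊗ A_{i_Y})(E_{j_X} ⊗ E_{j_0}) = k_{i_Y} (E_{j_X} ⊗ E_{j_0}); (A_{i_X} ⊗ J)(I ⊗ E_{j_Y}) = 0; and (I ⊗ A_{i_Y})(I ⊗ E_{j_Y}) = P_{i_Y}(j_Y) (I ⊗ E_{j_Y}), for i_X ≠ i_0 and j_Y ≠ j_0. -/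
open Matrix

open Kronecker

set_option linter.unusedSectionVars false

section Helpers
variable {Z K : Type*} [Fintype Z] [DecidableEq Z] [Fintype K] [DecidableEq K]

lemma bmAlg_mul_mem (R : Z → Z → K)
    (hcl : ∀ i j : K, ∃ c : K → ℂ, adjMat R i * adjMat R j = ∑ k : K, c k • adjMat R k)
    {A B : Matrix Z Z ℂ} (hA : A ∈ bmAlg R) (hB : B ∈ bmAlg R) : A * B ∈ bmAlg R := by
  induction hA using Submodule.span_induction with
  | mem x hx =>
    induction hB using Submodule.span_induction with
    | mem y hy =>
      obtain ⟨i, rfl⟩ := hx; obtain ⟨j, rfl⟩ := hy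
      obtain ⟨c, hc⟩ := hcl i j
      rw [hc]
      exact Submodule.sum_mem _ fun k _ =>
        Submodule.smul_mem _ _ (Submodule.subset_span ⟨k, rfl⟩)
    | zero => simp [bmAlg]
    | add y z hy hz ihy ihz => rw [mul_add]; exact Submodule.add_mem _ ihy ihz
    | smul a y hy ihy => rw [mul_smul_comm]; exact Submodule.smul_mem _ _ ihy
  | zero => simp [bmAlg]
  | add x y hx hy ihx ihy => rw [add_mul]; exact Submodule.add_mem _ ihx ihy
  | smul a x hx ihx => rw [smul_mul_assoc]; exact Submodule.smul_mem _ _ ihx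

lemma bmAlg_comm (R : Z → Z → K)
    (hc : ∀ i j : K, adjMat R i * adjMat R j = adjMat R j * adjMat R i)
    {A B : Matrix Z Z ℂ} (hA : A ∈ bmAlg R) (hB : B ∈ bmAlg R) : A * B = B * A := by
  induction hA using Submodule.span_induction with
  | mem x hx =>
    induction hB using Submodule.span_induction with
    | mem y hy => obtain ⟨i, rfl⟩ := hx; obtain ⟨j, rfl⟩ := hy; exact hc i j
    | zero => simp
    | add y z _ _ ihy ihz => rw [mul_add, add_mul, ihy, ihz]
    | smul a y _ ihy => rw [mul_smul_comm, smul_mul_assoc, ihy]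
  | zero => simp
  | add x y _ _ ihx ihy => rw [add_mul, mul_add, ihx, ihy]
  | smul a x _ ihx => rw [smul_mul_assoc, mul_smul_comm, ihx]

lemma bmAlg_const (R : Z → Z → K) {F : Matrix Z Z ℂ} (hF : F ∈ bmAlg R)
    {x y x' y' : Z} (h : R x y = R x' y') : F x y = F x' y' := by
  induction hF using Submodule.span_induction with
  | mem A hA => obtain ⟨i, rfl⟩ := hA; simp only [adjMat, h]
  | zero => simp
  | add A B _ _ ihA ihB => simp [Matrix.add_apply, ihA, ihB]
  | smul a A _ ihA => simp [Matrix.smul_apply, ihA]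

lemma J_mem_bmAlg (R : Z → Z → K) :
    (Matrix.of fun _ _ : Z => (1 : ℂ)) ∈ bmAlg R := by
  have hJ : (Matrix.of fun _ _ : Z => (1 : ℂ)) = ∑ i : K, adjMat R i := by
    ext x y
    simp [adjMat, Matrix.sum_apply]
  rw [hJ]
  exact Submodule.sum_mem _ fun i _ => Submodule.subset_span ⟨i, rfl⟩

lemma JJ_eq : (Matrix.of fun _ _ : Z => (1 : ℂ)) * (Matrix.of fun _ _ : Z => (1 : ℂ)) =
    (Fintype.card Z : ℂ) • (Matrix.of fun _ _ : Z => (1 : ℂ)) := by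
  ext x y
  simp [Matrix.mul_apply]


lemma J_mul_primIdem_eq_zero (R : Z → Z → K) (i0 : K) (hid : ∀ x y, R x y = i0 ↔ x = y)
    (hcl : ∀ i j : K, ∃ c : K → ℂ, adjMat R i * adjMat R j = ∑ k : K, c k • adjMat R k)
    (hc : ∀ i j : K, adjMat R i * adjMat R j = adjMat R j * adjMat R i)
    {E : Matrix Z Z ℂ} (hE : IsPrimIdem (bmAlg R) E)
    (hne : E ≠ (Fintype.card Z : ℂ)⁻¹ • Matrix.of (fun _ _ : Z => (1 : ℂ))) :
    (Matrix.of fun _ _ : Z => (1 : ℂ)) * E = 0 := by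
  obtain ⟨hEM, hEE, hEne, hprim⟩ := hE
  have hZ : Nonempty Z := by
    by_contra h
    rw [not_nonempty_iff] at h
    exact hEne (by ext x y; exact (h.false x).elim)
  have hn : (Fintype.card Z : ℂ) ≠ 0 :=
    Nat.cast_ne_zero.mpr (@Fintype.card_ne_zero _ _ hZ)
  obtain ⟨z₀⟩ := hZ
  set J : Matrix Z Z ℂ := Matrix.of fun _ _ : Z => (1 : ℂ) with hJdef
  set c : ℂ := (Fintype.card Z : ℂ)⁻¹ with hcdef
  have hcne : c ≠ 0 := inv_ne_zero hn
  set E0 : Matrix Z Z ℂ := c • J with hE0def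
  have hE0M : E0 ∈ bmAlg R := Submodule.smul_mem _ _ (J_mem_bmAlg R)
  have hE0E0 : E0 * E0 = E0 := by
    rw [hE0def, smul_mul_assoc, mul_smul_comm, JJ_eq, smul_smul, smul_smul,
      mul_comm c, mul_assoc, inv_mul_cancel₀ hn, mul_one]
  have hcomm : E0 * E = E * E0 := bmAlg_comm R hc hE0M hEM
  have hFM : E0 * E ∈ bmAlg R := bmAlg_mul_mem R hcl hE0M hEM
  have hFF : (E0 * E) * (E0 * E) = E0 * E := by
    rw [mul_assoc E0 E (E0 * E), ← mul_assoc E E0 E, ← hcomm, mul_assoc E0 E E, hEE,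
      ← mul_assoc, hE0E0]
  have hEF : E * (E0 * E) = E0 * E := by
    rw [← mul_assoc, ← hcomm, mul_assoc, hEE]
  rcases hprim _ hFM hFF hEF with h0 | hEq
  · -- E0 * E = 0, hence J * E = 0
    have h1 : c • (J * E) = 0 := by rw [← smul_mul_assoc]; exact h0
    rcases smul_eq_zero.mp h1 with h | h
    · exact absurd h hcne
    · exact h
  · -- E0 * E = E : derive a contradiction
    exfalso
    set G : Matrix Z Z ℂ := E0 - E with hGdef
    have hGM : G ∈ bmAlg R := Submodule.sub_mem _ hE0M hEM
    have hGG : G * G = G := by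
      rw [hGdef, sub_mul, mul_sub, mul_sub, hE0E0, hEE, ← hcomm, hEq]
      abel
    have hE0G : E0 * G = G := by rw [hGdef, mul_sub, hE0E0, hEq]
    have hrow : ∀ x x' y : Z, G x y = G x' y := by
      intro x x' y
      have h1 : ∀ w : Z, G w y = c * ∑ z, G z y := by
        intro w
        conv_lhs => rw [← hE0G]
        simp [hE0def, hJdef, Matrix.mul_apply, Finset.mul_sum]
      rw [h1 x, h1 x']
    have hGconst : ∀ x y : Z, G x y = G z₀ z₀ := by
      intro x y
      rw [hrow x y y]
      exact bmAlg_const R hGM (by rw [(hid y y).mpr rfl, (hid z₀ z₀).mpr rfl])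
    set c0 : ℂ := G z₀ z₀ with hc0def
    have hGval : (Fintype.card Z : ℂ) * (c0 * c0) = c0 := by
      have h2 := congrFun (congrFun hGG z₀) z₀
      rw [Matrix.mul_apply] at h2
      rw [Finset.sum_congr rfl fun z _ => by rw [hGconst z₀ z, hGconst z z₀]] at h2
      simpa [Finset.sum_const, Finset.card_univ, nsmul_eq_mul] using h2
    have : c0 * ((Fintype.card Z : ℂ) * c0 - 1) = 0 := by ring_nf; linear_combination hGval
    rcases mul_eq_zero.mp this with h | h
    · -- c0 = 0 → G = 0 → E = E0, contradiction with hne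
      have hG0 : G = 0 := by ext x y; rw [hGconst x y]; exact h
      rw [hGdef, sub_eq_zero] at hG0
      exact hne hG0.symm
    · -- c0 = c → G = E0 → E = 0, contradiction with hEne
      have hc0 : c0 = c := by
        rw [hcdef]
        field_simp
        linear_combination h
      have hGE0 : G = E0 := by
        ext x y
        rw [hGconst x y, hc0, hE0def]
        simp [hJdef]
      rw [hGdef] at hGE0
      exact hEne (sub_eq_self.mp hGE0)

end Helpers



/-- The first eigenmatrix of `X ⋏ Y`:
`(A_{i_X} ⊗ J)(E_{j_X} ⊗ E_{j₀}) = P_{i_X}(j_X)·#Y·(E_{j_X} ⊗ E_{j₀})`,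
`(I ⊗ A_{i_Y})(E_{j_X} ⊗ E_{j₀}) = k_{i_Y}(E_{j_X} ⊗ E_{j₀})`,
`(A_{i_X} ⊗ J)(I ⊗ E_{j_Y}) = 0`, and
`(I ⊗ A_{i_Y})(I ⊗ E_{j_Y}) = P_{i_Y}(j_Y)(I ⊗ E_{j_Y})`,
for `i_X ≠ i₀` and `j_Y ≠ j₀`, where `E_{j₀} = (1/#Y)J`. -/
theorem wreath_first_eigenmatrix {X Y IX IY : Type*}
    [Fintype X] [Fintype Y] [Fintype IX] [Fintype IY]
    [DecidableEq X] [DecidableEq Y] [DecidableEq IX] [DecidableEq IY]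
    (SX : AssocScheme X IX) (SY : AssocScheme Y IY)
    (hcX : ∀ i j : IX, adjMat SX.R i * adjMat SX.R j = adjMat SX.R j * adjMat SX.R i)
    (hcY : ∀ i j : IY, adjMat SY.R i * adjMat SY.R j = adjMat SY.R j * adjMat SY.R i)
    (iX : IX) (hiX : iX ≠ SX.i0) (iY : IY)
    (EX : Matrix X X ℂ) (hEX : IsPrimIdem (bmAlg SX.R) EX)
    (EY : Matrix Y Y ℂ) (hEY : IsPrimIdem (bmAlg SY.R) EY)
    (hEYne : EY ≠ (Fintype.card Y : ℂ)⁻¹ • Matrix.of (fun _ _ : Y => (1 : ℂ)))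
    (PX : ℂ) (hPX : adjMat SX.R iX * EX = PX • EX)
    (PY : ℂ) (hPY : adjMat SY.R iY * EY = PY • EY)
    (k : ℕ) (hk : ∀ y : Y, (Finset.univ.filter fun y' => SY.R y y' = iY).card = k) :
    (adjMat SX.R iX ⊗ₖ (Matrix.of fun _ _ : Y => (1 : ℂ))) *
        (EX ⊗ₖ ((Fintype.card Y : ℂ)⁻¹ • Matrix.of fun _ _ : Y => (1 : ℂ))) =
      (PX * (Fintype.card Y : ℂ)) •
        (EX ⊗ₖ ((Fintype.card Y : ℂ)⁻¹ • Matrix.of fun _ _ : Y => (1 : ℂ))) ∧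
    ((1 : Matrix X X ℂ) ⊗ₖ adjMat SY.R iY) *
        (EX ⊗ₖ ((Fintype.card Y : ℂ)⁻¹ • Matrix.of fun _ _ : Y => (1 : ℂ))) =
      (k : ℂ) • (EX ⊗ₖ ((Fintype.card Y : ℂ)⁻¹ • Matrix.of fun _ _ : Y => (1 : ℂ))) ∧
    (adjMat SX.R iX ⊗ₖ (Matrix.of fun _ _ : Y => (1 : ℂ))) *
        ((1 : Matrix X X ℂ) ⊗ₖ EY) = 0 ∧
    ((1 : Matrix X X ℂ) ⊗ₖ adjMat SY.R iY) * ((1 : Matrix X X ℂ) ⊗ₖ EY) =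
      PY • ((1 : Matrix X X ℂ) ⊗ₖ EY) := by
  obtain ⟨hEXM, hEXEX, hEXne, _⟩ := hEX
  have hJJ : (Matrix.of fun _ _ : Y => (1 : ℂ)) * (Matrix.of fun _ _ : Y => (1 : ℂ)) =
      (Fintype.card Y : ℂ) • (Matrix.of fun _ _ : Y => (1 : ℂ)) := JJ_eq
  have hAJ : adjMat SY.R iY * (Matrix.of fun _ _ : Y => (1 : ℂ)) =
      (k : ℂ) • (Matrix.of fun _ _ : Y => (1 : ℂ)) := by
    ext x y
    simp only [Matrix.mul_apply, adjMat, Matrix.of_apply, mul_one, Matrix.smul_apply,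
      smul_eq_mul]
    rw [Finset.sum_boole, ← hk x]
  have hJE : (Matrix.of fun _ _ : Y => (1 : ℂ)) * EY = 0 :=
    J_mul_primIdem_eq_zero SY.R SY.i0 SY.ident SY.closed hcY hEY hEYne
  refine ⟨?_, ?_, ?_, ?_⟩
  · rw [← Matrix.mul_kronecker_mul, hPX, mul_smul_comm, hJJ, smul_comm,
      Matrix.smul_kronecker, Matrix.kronecker_smul, smul_smul]
  · rw [← Matrix.mul_kronecker_mul, one_mul, mul_smul_comm, hAJ, smul_comm,
      Matrix.kronecker_smul]
  · rw [← Matrix.mul_kronecker_mul, hJE, Matrix.mul_one]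
    exact Matrix.kroneckerMap_zero_right _ (fun a => mul_zero a) _
  · rw [← Matrix.mul_kronecker_mul, one_mul, hPY, Matrix.kronecker_smul]
end

section
/- Any automorphism (f, τ) of the wreath product X ⋏ Y maps each fiber {x} × Y to another fiber {x'} × Y, and hence induces a well-defined bijection π(f) of X; moreover the pair (π(f), π(τ)) is an automorphism of the association scheme X. -/
open Matrix

/-- An automorphism of an association scheme `(Z,R,K)`: a pair of bijections
`(f, τ)` with `R (f x) (f y) = τ (R x y)`. -/
def IsAuto {Z K : Type*} (R : Z → Z → K) (f : Z → Z) (τ : K → K) : Prop :=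
  Function.Bijective f ∧ Function.Bijective τ ∧ ∀ x y, R (f x) (f y) = τ (R x y)

theorem wreathR_inr {X Y IX IY : Type*} [DecidableEq IX]
    {RX : X → X → IX} {i0X : IX} {RY : Y → Y → IY}
    {p q : X × Y} {j : IY} :
    wreathR RX i0X RY p q = Sum.inr j ↔ RX p.1 q.1 = i0X ∧ RY p.2 q.2 = j := by
  unfold wreathR
  split <;> simp_all

theorem wreathR_inl {X Y IX IY : Type*} [DecidableEq IX]
    {RX : X → X → IX} {i0X : IX} {RY : Y → Y → IY}
    {p q : X × Y} {i : IX} {h : i ≠ i0X} :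
    wreathR RX i0X RY p q = Sum.inl ⟨i, h⟩ ↔ RX p.1 q.1 = i := by
  unfold wreathR
  split <;> simp_all
  · rintro rfl; simp_all

/-- Any automorphism `(f, τ)` of `X ⋏ Y` maps each fiber `{x} × Y` to another
fiber, hence induces a well-defined bijection `π(f)` of `X`; moreover the pair
`(π(f), π(τ))` is an automorphism of `X`, where `π(τ)` is induced via
`π : I_X ⋏ I_Y → I_X`. -/
theorem wreath_auto_induces {X Y IX IY : Type*}
    [Fintype X] [Fintype Y] [Fintype IX] [Fintype IY]
    [DecidableEq X] [DecidableEq Y] [DecidableEq IX] [DecidableEq IY]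
    (SX : AssocScheme X IX) (SY : AssocScheme Y IY)
    (f : X × Y → X × Y) (τ : ({i : IX // i ≠ SX.i0} ⊕ IY) → ({i : IX // i ≠ SX.i0} ⊕ IY))
    (hf : IsAuto (wreathR SX.R SX.i0 SY.R) f τ) :
    (∀ x : X, ∀ y y' : Y, (f (x, y)).1 = (f (x, y')).1) ∧
    ∃ (g : X → X) (σ : IX → IX),
      (∀ x y, (f (x, y)).1 = g x) ∧
      (∀ w : ({i : IX // i ≠ SX.i0} ⊕ IY),
        σ (Sum.elim (fun i : {i : IX // i ≠ SX.i0} => i.1) (fun _ : IY => SX.i0) w) =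
          Sum.elim (fun i : {i : IX // i ≠ SX.i0} => i.1) (fun _ : IY => SX.i0) (τ w)) ∧
      IsAuto SX.R g σ := by
  obtain ⟨hfb, hτb, hcom⟩ := hf
  obtain ⟨⟨y0, y0'⟩, -⟩ := SY.surj SY.i0
  obtain ⟨⟨x0, x0'⟩, -⟩ := SX.surj SX.i0
  set R := wreathR SX.R SX.i0 SY.R with hR
  -- τ fixes the identity relation
  have hself : ∀ p : X × Y, R p p = Sum.inr SY.i0 := fun p =>
    wreathR_inr.mpr ⟨(SX.ident _ _).mpr rfl, (SY.ident _ _).mpr rfl⟩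
  have hτ0 : τ (Sum.inr SY.i0) = Sum.inr SY.i0 := by
    have h2 := hcom (x0, y0) (x0, y0)
    rw [hself, hself] at h2
    exact h2.symm
  set e := Equiv.ofBijective f hfb with he
  have hfe : ∀ p, f p = e p := fun p => rfl
  have hfsymm : ∀ p, f (e.symm p) = p := fun p => e.apply_symm_apply p
  -- Key lemma A : τ maps inr relations to inr relations
  have keyA : ∀ j : IY, ∃ j' : IY, τ (Sum.inr j) = Sum.inr j' := by
    intro j
    by_contra hcon
    push_neg at hcon
    obtain ⟨⟨i, hi⟩, hτj⟩ : ∃ w, τ (Sum.inr j) = Sum.inl w := by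
      cases h : τ (Sum.inr j) with
      | inl w => exact ⟨w, rfl⟩
      | inr j' => exact absurd h (hcon j')
    obtain ⟨⟨x1, x2⟩, hx⟩ := SX.surj i
    simp only at hx
    have hx12 : x1 ≠ x2 := by
      rintro rfl
      apply hi
      rw [← hx]
      exact (SX.ident x1 x1).mpr rfl
    set p0 := e.symm (x1, y0) with hp0
    set a := p0.1 with ha
    set S : Finset (X × Y) :=
      Finset.univ.filter (fun q' => ∃ j'' : IY, R (x1, y0) q' = τ (Sum.inr j'')) with hS
    have hSimg : S = Finset.image (fun y => f (a, y)) Finset.univ := by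
      ext q'
      simp only [hS, Finset.mem_filter, Finset.mem_univ, true_and, Finset.mem_image]
      constructor
      · rintro ⟨j'', hj''⟩
        have hq : f (e.symm q') = q' := hfsymm q'
        have hc := hcom p0 (e.symm q')
        rw [hfsymm, hq] at hc
        rw [hc] at hj''
        have hw : R p0 (e.symm q') = Sum.inr j'' := hτb.1 hj''
        have h1' : (e.symm q').1 = a := by
          have := (SX.ident p0.1 (e.symm q').1).mp (wreathR_inr.mp hw).1
          exact this.symm
        exact ⟨(e.symm q').2, by rw [← h1']; rw [Prod.mk.eta]; exact hq⟩
      · rintro ⟨y, rfl⟩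
        have hc := hcom p0 (a, y)
        rw [hfsymm] at hc
        have hw : R p0 (a, y) = Sum.inr (SY.R p0.2 y) :=
          wreathR_inr.mpr ⟨(SX.ident _ _).mpr rfl, rfl⟩
        exact ⟨SY.R p0.2 y, by rw [hc, hw]⟩
    have hScard : S.card = Fintype.card Y := by
      rw [hSimg, Finset.card_image_of_injective _ (fun y y' h => by
        simpa using hfb.1 h), Finset.card_univ]
    have hsub : insert (x1, y0) (Finset.image (fun y => ((x2 : X), (y : Y))) Finset.univ) ⊆ S := by
      intro q hq
      simp only [Finset.mem_insert, Finset.mem_image, Finset.mem_univ, true_and] at hq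
      simp only [hS, Finset.mem_filter, Finset.mem_univ, true_and]
      rcases hq with rfl | ⟨y, rfl⟩
      · exact ⟨SY.i0, by rw [hself, hτ0]⟩
      · refine ⟨j, ?_⟩
        rw [hτj]
        exact wreathR_inl.mpr hx
    have hnot : (x1, y0) ∉ Finset.image (fun y => ((x2 : X), (y : Y))) Finset.univ := by
      simp only [Finset.mem_image, Finset.mem_univ, true_and, Prod.mk.injEq, not_exists]
      intro y h
      exact hx12 h.1.symm
    have h5 := Finset.card_le_card hsub
    rw [Finset.card_insert_of_notMem hnot,
      Finset.card_image_of_injective _ (fun y y' h => by simpa using h),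
      Finset.card_univ, hScard] at h5
    omega
  -- Key lemma B : τ maps inl relations to inl relations
  have keyB : ∀ w : {i : IX // i ≠ SX.i0}, ∃ w', τ (Sum.inl w) = Sum.inl w' := by
    intro w
    cases h : τ (Sum.inl w) with
    | inl w' => exact ⟨w', rfl⟩
    | inr j =>
      exfalso
      have tinj : Function.Injective (fun j : IY => (keyA j).choose) := by
        intro j1 j2 hj
        have h1 := (keyA j1).choose_spec
        have h2 := (keyA j2).choose_spec
        have h3 : τ (Sum.inr j1) = τ (Sum.inr j2) := by
          rw [h1, h2]; exact congrArg Sum.inr hj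
        exact Sum.inr_injective (hτb.1 h3)
      obtain ⟨j'', hj''⟩ := Finite.surjective_of_injective tinj j
      have h4 : τ (Sum.inr j'') = Sum.inr j :=
        (keyA j'').choose_spec.trans (congrArg Sum.inr hj'')
      rw [← h] at h4
      exact Sum.inr_ne_inl (hτb.1 h4)
  -- first conjunct: fibers map to fibers
  have fib : ∀ x : X, ∀ y y' : Y, (f (x, y)).1 = (f (x, y')).1 := by
    intro x y y'
    have hc := hcom (x, y) (x, y')
    have hw : R (x, y) (x, y') = Sum.inr (SY.R y y') :=
      wreathR_inr.mpr ⟨(SX.ident _ _).mpr rfl, rfl⟩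
    rw [hw] at hc
    obtain ⟨j', hj'⟩ := keyA (SY.R y y')
    rw [hj'] at hc
    exact (SX.ident _ _).mp (wreathR_inr.mp hc).1
  refine ⟨fib, ?_⟩
  set π : ({i : IX // i ≠ SX.i0} ⊕ IY) → IX :=
    Sum.elim (fun i : {i : IX // i ≠ SX.i0} => i.1) (fun _ : IY => SX.i0) with hπ
  set g : X → X := fun x => (f (x, y0)).1 with hg
  set σ : IX → IX := fun i =>
    if h : i = SX.i0 then SX.i0 else π (τ (Sum.inl ⟨i, h⟩)) with hσ
  have hσ0 : σ SX.i0 = SX.i0 := by simp [hσ]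
  have hσne : ∀ (i : IX) (h : i ≠ SX.i0), σ i = π (τ (Sum.inl ⟨i, h⟩)) := by
    intro i h; simp [hσ, h]
  refine ⟨g, σ, fun x y => fib x y y0, ?_, ?_, ?_, ?_⟩
  · -- the compatibility condition for σ
    intro w
    cases w with
    | inl v =>
      simp only [hπ, Sum.elim_inl]
      exact hσne v.1 v.2
    | inr j =>
      simp only [hπ, Sum.elim_inr]
      obtain ⟨j', hj'⟩ := keyA j
      rw [hσ0, hj']
      rfl
  · -- g bijective
    rw [Finite.injective_iff_bijective.symm]
    intro x x' hxx
    have hc := hcom (x, y0) (x', y0)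
    have h1 : R (f (x, y0)) (f (x', y0)) = Sum.inr (SY.R (f (x, y0)).2 (f (x', y0)).2) :=
      wreathR_inr.mpr ⟨(SX.ident _ _).mpr hxx, rfl⟩
    rw [h1] at hc
    by_cases h : SX.R x x' = SX.i0
    · exact (SX.ident x x').mp h
    · exfalso
      have hw : R (x, y0) (x', y0) = Sum.inl ⟨SX.R x x', h⟩ := wreathR_inl.mpr rfl
      rw [hw] at hc
      obtain ⟨w', hw'⟩ := keyB ⟨SX.R x x', h⟩
      rw [hw'] at hc
      exact Sum.inr_ne_inl hc
  · -- σ bijective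
    rw [Finite.injective_iff_bijective.symm]
    intro i i' hii
    by_cases h : i = SX.i0 <;> by_cases h' : i' = SX.i0
    · rw [h, h']
    · exfalso
      rw [h, hσ0, hσne i' h'] at hii
      obtain ⟨w', hw'⟩ := keyB ⟨i', h'⟩
      rw [hw'] at hii
      exact w'.2 hii.symm
    · exfalso
      rw [h', hσ0, hσne i h] at hii
      obtain ⟨w', hw'⟩ := keyB ⟨i, h⟩
      rw [hw'] at hii
      exact w'.2 hii
    · rw [hσne i h, hσne i' h'] at hii
      obtain ⟨w1, hw1⟩ := keyB ⟨i, h⟩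
      obtain ⟨w2, hw2⟩ := keyB ⟨i', h'⟩
      rw [hw1, hw2] at hii
      simp only [hπ, Sum.elim_inl] at hii
      have : (Sum.inl w1 : {i : IX // i ≠ SX.i0} ⊕ IY) = Sum.inl w2 := by
        rw [Subtype.ext hii]
      have h3 := hτb.1 (hw1.trans (this.trans hw2.symm))
      have := Sum.inl_injective h3
      exact congrArg Subtype.val this
  · -- homomorphism property
    intro x x'
    have hc := hcom (x, y0) (x', y0)
    by_cases h : SX.R x x' = SX.i0
    · have hxx : x = x' := (SX.ident x x').mp h
      subst hxx
      rw [h, hσ0]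
      exact (SX.ident _ _).mpr rfl
    · have hw : R (x, y0) (x', y0) = Sum.inl ⟨SX.R x x', h⟩ := wreathR_inl.mpr rfl
      rw [hw] at hc
      obtain ⟨w', hw'⟩ := keyB ⟨SX.R x x', h⟩
      rw [hw'] at hc
      have h1 : SX.R (g x) (g x') = w'.1 := by
        have hc' : R (f (x, y0)) (f (x', y0)) = Sum.inl ⟨w'.1, w'.2⟩ := hc
        exact wreathR_inl.mp hc'
      rw [h1, hσne _ h, hw']
      rfl
end

section
/- If (f, τ) is an automorphism of X ⋏ Y with #I_Y > 1, then τ maps I_X \ {i_0} to itself and I_Y to itself; i.e., no relation of front type can be sent to a relation of rear type. -/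
open Matrix

/-- If `(f, τ)` is an automorphism of `X ⋏ Y` and `#I_Y > 1`, then `τ` maps
front-type relations (`I_X \ {i₀}`) to front-type relations and rear-type
relations (`I_Y`) to rear-type relations. -/
theorem wreath_auto_preserves_types {X Y IX IY : Type*}
    [Fintype X] [Fintype Y] [Fintype IX] [Fintype IY]
    [DecidableEq X] [DecidableEq Y] [DecidableEq IX] [DecidableEq IY]
    (SX : AssocScheme X IX) (SY : AssocScheme Y IY)
    (hIY : 1 < Fintype.card IY)
    (f : X × Y → X × Y) (τ : ({i : IX // i ≠ SX.i0} ⊕ IY) → ({i : IX // i ≠ SX.i0} ⊕ IY))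
    (hf : IsAuto (wreathR SX.R SX.i0 SY.R) f τ) :
    (∀ i : {i : IX // i ≠ SX.i0}, (τ (Sum.inl i)).isLeft = true) ∧
    (∀ j : IY, (τ (Sum.inr j)).isRight = true) := by
  obtain ⟨hfb, hτb, hR⟩ := hf
  set R := wreathR SX.R SX.i0 SY.R with hRdef
  -- characterizations of the wreath relation
  have hinr : ∀ (p q : X × Y) (j : IY), R p q = Sum.inr j ↔ q.1 = p.1 ∧ SY.R p.2 q.2 = j := by
    intro p q j
    rw [hRdef]
    unfold wreathR
    by_cases h : SX.R p.1 q.1 = SX.i0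
    · rw [dif_pos h]
      constructor
      · intro he
        exact ⟨((SX.ident _ _).1 h).symm, Sum.inr.inj he⟩
      · intro he; rw [he.2]
    · rw [dif_neg h]
      constructor
      · intro he; exact absurd he (by simp)
      · intro he; exact absurd ((SX.ident _ _).2 he.1.symm) h
  have hinl : ∀ (p q : X × Y) (i : {i : IX // i ≠ SX.i0}),
      R p q = Sum.inl i ↔ SX.R p.1 q.1 = i.1 := by
    intro p q i
    rw [hRdef]
    unfold wreathR
    by_cases h : SX.R p.1 q.1 = SX.i0
    · rw [dif_pos h]
      constructor
      · intro he; exact absurd he (by simp)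
      · intro he; exact absurd (he ▸ h) i.2
    · rw [dif_neg h]
      constructor
      · intro he
        have := Sum.inl.inj he
        exact congrArg Subtype.val this
      · intro he
        congr 1
        exact Subtype.ext he
  -- cardinalities are preserved by the automorphism
  have hcard : ∀ (p : X × Y) (k), Fintype.card {q // R p q = k}
      = Fintype.card {q // R (f p) q = τ k} := by
    intro p k
    apply Fintype.card_congr
    refine (Equiv.ofBijective f hfb).subtypeEquiv (fun q => ?_)
    constructor
    · intro h
      show R (f p) (f q) = τ k
      rw [hR, h]
    · intro h
      apply hτb.1
      rw [← hR]
      exact h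
  have hrear : ∀ (p : X × Y) (j : IY),
      Fintype.card {q // R p q = Sum.inr j} = Fintype.card {y // SY.R p.2 y = j} := by
    intro p j
    apply Fintype.card_congr
    refine ⟨fun q => ⟨q.1.2, ((hinr _ _ _).1 q.2).2⟩,
      fun y => ⟨(p.1, y.1), (hinr _ _ _).2 ⟨rfl, y.2⟩⟩, ?_, ?_⟩
    · intro q
      apply Subtype.ext
      have h1 := ((hinr _ _ _).1 q.2).1
      exact Prod.ext h1.symm rfl
    · intro y
      rfl
  have hfront : ∀ (p : X × Y) (i : {i : IX // i ≠ SX.i0}),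
      Fintype.card {q // R p q = Sum.inl i}
        = Fintype.card {x // SX.R p.1 x = i.1} * Fintype.card Y := by
    intro p i
    rw [← Fintype.card_prod]
    apply Fintype.card_congr
    refine ⟨fun q => (⟨q.1.1, (hinl _ _ _).1 q.2⟩, q.1.2),
      fun xy => ⟨(xy.1.1, xy.2), (hinl _ _ _).2 xy.1.2⟩, ?_, ?_⟩
    · intro q; rfl
    · intro xy; rfl
  -- X and Y are nonempty
  obtain ⟨px, -⟩ := SX.surj SX.i0
  have hj0 : Nonempty IY := Fintype.card_pos_iff.1 (by omega)
  -- key claim : rear relations go to rear relations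
  have key : ∀ j : IY, (τ (Sum.inr j)).isRight = true := by
    intro j
    by_contra hcon
    obtain ⟨i, hi⟩ : ∃ i, τ (Sum.inr j) = Sum.inl i := by
      cases h : τ (Sum.inr j) with
      | inl i => exact ⟨i, rfl⟩
      | inr j' => rw [h] at hcon; simp at hcon
    obtain ⟨pr, hpr⟩ := SY.surj j
    set y := pr.1
    set p : X × Y := (px.1, y) with hp
    have hc := hcard p (Sum.inr j)
    rw [hi, hrear, hfront] at hc
    have hpos : 0 < Fintype.card {y2 // SY.R p.2 y2 = j} :=
      Fintype.card_pos_iff.2 ⟨⟨pr.2, hpr⟩⟩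
    have hle : Fintype.card {y2 // SY.R p.2 y2 = j} ≤ Fintype.card Y :=
      Fintype.card_subtype_le _
    have hall : ∀ y2, SY.R p.2 y2 = j := by
      intro y2
      by_contra hne
      have hlt := Fintype.card_subtype_lt (p := fun y2 => SY.R p.2 y2 = j) hne
      have hm : 1 ≤ Fintype.card {x // SX.R (f p).1 x = i.1} := by
        rcases Nat.eq_zero_or_pos (Fintype.card {x // SX.R (f p).1 x = i.1}) with h0 | h1
        · rw [h0] at hc; omega
        · exact h1
      nlinarith
    have hji : j = SY.i0 := by
      rw [← hall p.2]
      exact (SY.ident _ _).2 rfl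
    have hally : ∀ y2 : Y, y2 = p.2 := by
      intro y2
      exact ((SY.ident _ _).1 (hji ▸ hall y2)).symm
    have : Fintype.card IY ≤ 1 := by
      refine Fintype.card_le_one_iff.2 (fun j1 j2 => ?_)
      obtain ⟨q1, hq1⟩ := SY.surj j1
      obtain ⟨q2, hq2⟩ := SY.surj j2
      rw [← hq1, ← hq2]
      show SY.R q1.1 q1.2 = SY.R q2.1 q2.2
      rw [hally q1.1, hally q1.2, hally q2.1, hally q2.2]
    omega
  refine ⟨?_, key⟩
  -- fronts go to fronts, by a counting argument on the finite rear set
  intro i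
  by_contra hcon
  obtain ⟨j, hj⟩ : ∃ j, τ (Sum.inl i) = Sum.inr j := by
    cases h : τ (Sum.inl i) with
    | inl i' => rw [h] at hcon; simp at hcon
    | inr j => exact ⟨j, rfl⟩
  set T : Finset ({i : IX // i ≠ SX.i0} ⊕ IY) := Finset.univ.image Sum.inr with hT
  have hsub : Finset.image τ T ⊆ T := by
    intro a ha
    obtain ⟨b, hb, hba⟩ := Finset.mem_image.1 ha
    obtain ⟨j', -, hj'⟩ := Finset.mem_image.1 hb
    have := key j'
    rw [hj', hba] at this
    cases h : a with
    | inl i' => rw [h] at this; simp at this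
    | inr j'' => exact Finset.mem_image.2 ⟨j'', Finset.mem_univ _, rfl⟩
  have hcardT : (Finset.image τ T).card = T.card :=
    Finset.card_image_of_injective _ hτb.1
  have heq : Finset.image τ T = T := Finset.eq_of_subset_of_card_le hsub (le_of_eq hcardT.symm)
  have hmem : Sum.inr j ∈ Finset.image τ T := by
    rw [heq]
    exact Finset.mem_image.2 ⟨j, Finset.mem_univ _, rfl⟩
  obtain ⟨k, hk, hkj⟩ := Finset.mem_image.1 hmem
  obtain ⟨j'', -, hj''⟩ := Finset.mem_image.1 hk
  have : k = Sum.inl i := hτb.1 (by rw [hkj, hj])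
  rw [← hj''] at this
  exact absurd this (by simp)
end

section
/- There is a surjective group homomorphism P : Aut(X ⋏ Y) → Aut(X) which admits a splitting, given by sending (g, τ) ∈ Aut(X) to (g × id_Y, τ ⋏ id_{I_Y}); consequently Aut(X ⋏ Y) ≅ ker(P) ⋊ Aut(X). -/
open Matrix

/-- The automorphism group of an association scheme with relation map `R`, as a
subgroup of `Perm Z × Perm K`: pairs `(f, τ)` with `R (f x) (f y) = τ (R x y)`. -/
def autGroup {Z K : Type*} (R : Z → Z → K) : Subgroup (Equiv.Perm Z × Equiv.Perm K) where
  carrier := {p | ∀ x y, R (p.1 x) (p.1 y) = p.2 (R x y)}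
  one_mem' := by intro x y; rfl
  mul_mem' := by
    intro a b ha hb x y
    have h1 : (a * b).1 x = a.1 (b.1 x) := rfl
    have h2 : (a * b).1 y = a.1 (b.1 y) := rfl
    rw [h1, h2, ha, hb]; rfl
  inv_mem' := by
    intro a ha x y
    have := ha (a.1⁻¹ x) (a.1⁻¹ y)
    rw [show a.1 (a.1⁻¹ x) = x from a.1.apply_symm_apply x,
      show a.1 (a.1⁻¹ y) = y from a.1.apply_symm_apply y] at this
    have h2 : (a⁻¹).2 (R x y) = a.2⁻¹ (R x y) := rfl
    rw [h2, this]
    simp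

namespace WreathAux

theorem perm_apply_inv_self {α : Type*} (f : Equiv.Perm α) (x : α) : f (f⁻¹ x) = x :=
  f.apply_symm_apply x

theorem perm_inv_apply_self {α : Type*} (f : Equiv.Perm α) (x : α) : f⁻¹ (f x) = x :=
  f.symm_apply_apply x

variable {X Y IX IY : Type*}
    [Fintype X] [Fintype Y] [Fintype IX] [Fintype IY]
    [DecidableEq X] [DecidableEq Y] [DecidableEq IX] [DecidableEq IY]
    (SX : AssocScheme X IX) (SY : AssocScheme Y IY)

lemma aut_rel {Z K : Type*} {R : Z → Z → K} (w : autGroup R) :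
    ∀ x y, R (w.1.1 x) (w.1.1 y) = w.1.2 (R x y) := w.2

noncomputable def y0 : Y := (SY.surj SY.i0).choose.1

lemma wr_inr_iff {p q : X × Y} {j : IY} :
    wreathR SX.R SX.i0 SY.R p q = Sum.inr j ↔ p.1 = q.1 ∧ SY.R p.2 q.2 = j := by
  unfold wreathR
  split_ifs with h
  · simp [(SX.ident p.1 q.1).1 h]
  · constructor
    · intro hh; simp at hh
    · rintro ⟨h1, _⟩; exact absurd ((SX.ident _ _).mpr h1) h

/-- Key lemma: any automorphism of the wreath product sends `inr` relations to
`inr` relations. -/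
lemma aut_inr (w : autGroup (wreathR SX.R SX.i0 SY.R)) (j : IY) :
    ∃ j', w.1.2 (Sum.inr j) = Sum.inr j' := by
  rcases hv : w.1.2 (Sum.inr j) with ⟨i, hi⟩ | j'
  swap
  · exact ⟨j', rfl⟩
  exfalso
  obtain ⟨⟨x1, x1'⟩, hx⟩ := SX.surj i
  simp only at hx
  have hxne : x1 ≠ x1' := fun e => hi (by rw [← hx]; exact (SX.ident x1 x1').mpr e)
  set f := w.1.1 with hf
  set p : X × Y := f⁻¹ (x1, y0 SY) with hp
  have hcond : SX.R x1 x1' ≠ SX.i0 := by rw [hx]; exact hi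
  have hq : ∀ y' : Y, p.1 = (f⁻¹ (x1', y')).1 := by
    intro y'
    have h1 : wreathR SX.R SX.i0 SY.R (f p) (f (f⁻¹ (x1', y'))) =
        w.1.2 (wreathR SX.R SX.i0 SY.R p (f⁻¹ (x1', y'))) := aut_rel w _ _
    rw [hp, perm_apply_inv_self, perm_apply_inv_self] at h1
    have hL : wreathR SX.R SX.i0 SY.R (x1, y0 SY) (x1', y') = Sum.inl ⟨i, hi⟩ := by
      unfold wreathR
      rw [dif_neg hcond]
      exact congrArg Sum.inl (Subtype.ext hx)
    rw [hL, ← hv] at h1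
    have h3 := (w.1.2).injective h1.symm
    exact ((wr_inr_iff SX SY).mp h3).1
  have hinj : Function.Injective (fun y' : Y => (f⁻¹ (x1', y')).2) := by
    intro y1 y2 h12
    have he : f⁻¹ (x1', y1) = f⁻¹ (x1', y2) :=
      Prod.ext (by rw [← hq y1, hq y2]) h12
    have := (f⁻¹).injective he
    exact congrArg Prod.snd this
  obtain ⟨y', hy'⟩ := Finite.surjective_of_injective hinj p.2
  have he1 : f⁻¹ (x1', y') = p := Prod.ext (hq y').symm hy'
  have he2 : (x1', y') = (x1, y0 SY) := by
    rw [← perm_apply_inv_self f (x1', y'), he1, hp, perm_apply_inv_self]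
  exact hxne (congrArg Prod.fst he2).symm

lemma aut_inl (w : autGroup (wreathR SX.R SX.i0 SY.R)) (i : {i : IX // i ≠ SX.i0}) :
    ∃ i', w.1.2 (Sum.inl i) = Sum.inl i' := by
  rcases hv : w.1.2 (Sum.inl i) with i' | j'
  · exact ⟨i', rfl⟩
  exfalso
  obtain ⟨j'', hj⟩ := aut_inr SX SY w⁻¹ j'
  have h1 : (w.1.2)⁻¹ (Sum.inr j') = Sum.inr j'' := hj
  rw [← hv, perm_inv_apply_self] at h1
  exact Sum.inl_ne_inr h1

lemma aut_fiber (w : autGroup (wreathR SX.R SX.i0 SY.R)) {p q : X × Y} (h : p.1 = q.1) :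
    (w.1.1 p).1 = (w.1.1 q).1 := by
  obtain ⟨j', hj⟩ := aut_inr SX SY w (SY.R p.2 q.2)
  have h1 := aut_rel w p q
  have h2 : wreathR SX.R SX.i0 SY.R p q = Sum.inr (SY.R p.2 q.2) :=
    (wr_inr_iff SX SY).mpr ⟨h, rfl⟩
  rw [h2, hj] at h1
  exact ((wr_inr_iff SX SY).mp h1).1


lemma pg_aux (w : autGroup (wreathR SX.R SX.i0 SY.R)) :
    Function.LeftInverse (fun x => ((w⁻¹).1.1 (x, y0 SY)).1)
      (fun x => (w.1.1 (x, y0 SY)).1) := by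
  intro x
  have h1 : ((w⁻¹).1.1 ((w.1.1 (x, y0 SY)).1, y0 SY)).1 =
      ((w⁻¹).1.1 (w.1.1 (x, y0 SY))).1 := aut_fiber SX SY w⁻¹ rfl
  have h2 : (w⁻¹).1.1 (w.1.1 (x, y0 SY)) = (x, y0 SY) :=
    perm_inv_apply_self w.1.1 (x, y0 SY)
  simp only [h1, h2]

noncomputable def Pg (w : autGroup (wreathR SX.R SX.i0 SY.R)) : Equiv.Perm X where
  toFun x := (w.1.1 (x, y0 SY)).1
  invFun x := ((w⁻¹).1.1 (x, y0 SY)).1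
  left_inv := pg_aux SX SY w
  right_inv := by
    have h := pg_aux SX SY w⁻¹
    rwa [inv_inv] at h

noncomputable def PtFun (w : autGroup (wreathR SX.R SX.i0 SY.R)) (i : IX) : IX :=
  if h : i = SX.i0 then SX.i0
  else Sum.elim Subtype.val (fun _ => SX.i0) (w.1.2 (Sum.inl ⟨i, h⟩))

lemma PtFun_i0 (w : autGroup (wreathR SX.R SX.i0 SY.R)) : PtFun SX SY w SX.i0 = SX.i0 :=
  dif_pos rfl

lemma PtFun_inl (w : autGroup (wreathR SX.R SX.i0 SY.R)) {i : IX} (h : i ≠ SX.i0)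
    {i' : {i : IX // i ≠ SX.i0}}
    (hw : w.1.2 (Sum.inl ⟨i, h⟩) = Sum.inl i') : PtFun SX SY w i = i'.1 := by
  rw [PtFun, dif_neg h, hw]; rfl

lemma pt_aux (w : autGroup (wreathR SX.R SX.i0 SY.R)) :
    Function.LeftInverse (PtFun SX SY w⁻¹) (PtFun SX SY w) := by
  intro i
  by_cases h : i = SX.i0
  · subst h; rw [PtFun_i0, PtFun_i0]
  · obtain ⟨i', hw⟩ := aut_inl SX SY w ⟨i, h⟩
    rw [PtFun_inl SX SY w h hw]
    have hw' : (w⁻¹).1.2 (Sum.inl ⟨i'.1, i'.2⟩) = Sum.inl ⟨i, h⟩ := by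
      show (w.1.2)⁻¹ (Sum.inl i') = Sum.inl ⟨i, h⟩
      rw [← hw, perm_inv_apply_self]
    rw [PtFun_inl SX SY w⁻¹ i'.2 hw']

noncomputable def Pt (w : autGroup (wreathR SX.R SX.i0 SY.R)) : Equiv.Perm IX where
  toFun := PtFun SX SY w
  invFun := PtFun SX SY w⁻¹
  left_inv := pt_aux SX SY w
  right_inv := by
    have h := pt_aux SX SY w⁻¹
    rwa [inv_inv] at h

lemma P_mem (w : autGroup (wreathR SX.R SX.i0 SY.R)) :
    (Pg SX SY w, Pt SX SY w) ∈ autGroup SX.R := by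
  show ∀ x x' : X, SX.R (Pg SX SY w x) (Pg SX SY w x') = Pt SX SY w (SX.R x x')
  intro x x'
  show SX.R (w.1.1 (x, y0 SY)).1 (w.1.1 (x', y0 SY)).1 = PtFun SX SY w (SX.R x x')
  by_cases h : SX.R x x' = SX.i0
  · rw [h, PtFun_i0]
    have hx : x = x' := (SX.ident x x').mp h
    subst hx
    exact (SX.ident _ _).mpr rfl
  · have h1 := aut_rel w (x, y0 SY) (x', y0 SY)
    have hL : wreathR SX.R SX.i0 SY.R (x, y0 SY) (x', y0 SY) = Sum.inl ⟨SX.R x x', h⟩ := by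
      unfold wreathR; rw [dif_neg h]
    obtain ⟨i', hw⟩ := aut_inl SX SY w ⟨SX.R x x', h⟩
    rw [hL, hw] at h1
    rw [PtFun_inl SX SY w h hw]
    unfold wreathR at h1
    split_ifs at h1 with hc
    exact congrArg Subtype.val (Sum.inl_injective h1)

noncomputable def Pfun (w : autGroup (wreathR SX.R SX.i0 SY.R)) : autGroup SX.R :=
  ⟨(Pg SX SY w, Pt SX SY w), P_mem SX SY w⟩

lemma Pg_apply (w : autGroup (wreathR SX.R SX.i0 SY.R)) (x : X) (y : Y) :
    Pg SX SY w x = (w.1.1 (x, y)).1 :=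
  aut_fiber SX SY w rfl

lemma Pfun_mul (a b : autGroup (wreathR SX.R SX.i0 SY.R)) :
    Pfun SX SY (a * b) = Pfun SX SY a * Pfun SX SY b := by
  apply Subtype.ext
  apply Prod.ext
  · apply Equiv.ext; intro x
    show ((a * b).1.1 (x, y0 SY)).1 = (a.1.1 ((b.1.1 (x, y0 SY)).1, y0 SY)).1
    have h0 : (a * b).1.1 (x, y0 SY) = a.1.1 (b.1.1 (x, y0 SY)) := rfl
    rw [h0]
    exact aut_fiber SX SY a (p := b.1.1 (x, y0 SY))
      (q := ((b.1.1 (x, y0 SY)).1, y0 SY)) rfl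
  · apply Equiv.ext; intro i
    show PtFun SX SY (a * b) i = PtFun SX SY a (PtFun SX SY b i)
    by_cases h : i = SX.i0
    · subst h; rw [PtFun_i0, PtFun_i0, PtFun_i0]
    · obtain ⟨i', hb⟩ := aut_inl SX SY b ⟨i, h⟩
      obtain ⟨i'', ha⟩ := aut_inl SX SY a i'
      have hab : (a * b).1.2 (Sum.inl ⟨i, h⟩) = Sum.inl i'' := by
        have h0 : (a * b).1.2 (Sum.inl ⟨i, h⟩) = a.1.2 (b.1.2 (Sum.inl ⟨i, h⟩)) := rfl
        rw [h0, hb, ha]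
      rw [PtFun_inl SX SY (a * b) h hab, PtFun_inl SX SY b h hb,
        PtFun_inl SX SY a i'.2 ha]

noncomputable def P : autGroup (wreathR SX.R SX.i0 SY.R) →* autGroup SX.R :=
  MonoidHom.mk' (Pfun SX SY) (Pfun_mul SX SY)


lemma aut_i0 (a : autGroup SX.R) : a.1.2 SX.i0 = SX.i0 := by
  obtain ⟨⟨x0, _⟩, _⟩ := SX.surj SX.i0
  have h := aut_rel a x0 x0
  have h1 : SX.R x0 x0 = SX.i0 := (SX.ident _ _).mpr rfl
  have h2 : SX.R (a.1.1 x0) (a.1.1 x0) = SX.i0 := (SX.ident _ _).mpr rfl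
  rw [h2, h1] at h
  exact h.symm

lemma aut_ne_i0 (a : autGroup SX.R) (i : IX) : i ≠ SX.i0 ↔ a.1.2 i ≠ SX.i0 := by
  constructor
  · intro h hc
    apply h
    apply a.1.2.injective
    rw [hc, aut_i0 SX a]
  · intro h hc
    subst hc
    exact h (aut_i0 SX a)

def sPerm2 (a : autGroup SX.R) : Equiv.Perm ({i : IX // i ≠ SX.i0} ⊕ IY) :=
  Equiv.sumCongr (a.1.2.subtypePerm (fun i => (aut_ne_i0 SX a i).symm)) (Equiv.refl IY)

lemma s_mem (a : autGroup SX.R) :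
    (Equiv.prodCongr a.1.1 (Equiv.refl Y), sPerm2 SX a) ∈
      autGroup (wreathR SX.R SX.i0 SY.R) := by
  show ∀ p q : X × Y, wreathR SX.R SX.i0 SY.R (Equiv.prodCongr a.1.1 (Equiv.refl Y) p)
    (Equiv.prodCongr a.1.1 (Equiv.refl Y) q) = sPerm2 SX a (wreathR SX.R SX.i0 SY.R p q)
  intro p q
  have hr := aut_rel a p.1 q.1
  show wreathR SX.R SX.i0 SY.R (a.1.1 p.1, p.2) (a.1.1 q.1, q.2) =
    sPerm2 SX a (wreathR SX.R SX.i0 SY.R p q)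
  unfold wreathR
  by_cases h : SX.R p.1 q.1 = SX.i0
  · have h' : SX.R (a.1.1 p.1) (a.1.1 q.1) = SX.i0 := by rw [hr, h, aut_i0 SX a]
    rw [dif_pos h', dif_pos h]
    rfl
  · have h' : SX.R (a.1.1 p.1) (a.1.1 q.1) ≠ SX.i0 := by
      rw [hr]; exact (aut_ne_i0 SX a _).mp h
    rw [dif_neg h', dif_neg h]
    show Sum.inl ⟨SX.R (a.1.1 p.1) (a.1.1 q.1), h'⟩ =
      Sum.inl (a.1.2.subtypePerm (fun i => (aut_ne_i0 SX a i).symm) ⟨SX.R p.1 q.1, h⟩)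
    exact congrArg Sum.inl (Subtype.ext hr)

def sfun (a : autGroup SX.R) : autGroup (wreathR SX.R SX.i0 SY.R) :=
  ⟨(Equiv.prodCongr a.1.1 (Equiv.refl Y), sPerm2 SX a), s_mem SX SY a⟩

lemma sfun_mul (a b : autGroup SX.R) :
    sfun SX SY (a * b) = sfun SX SY a * sfun SX SY b := by
  apply Subtype.ext
  apply Prod.ext
  · apply Equiv.ext; intro p; rfl
  · apply Equiv.ext; intro v
    rcases v with i | j
    · rfl
    · rfl

noncomputable def s : autGroup SX.R →* autGroup (wreathR SX.R SX.i0 SY.R) :=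
  MonoidHom.mk' (sfun SX SY) (sfun_mul SX SY)

lemma P_sfun (a : autGroup SX.R) : Pfun SX SY (sfun SX SY a) = a := by
  apply Subtype.ext
  apply Prod.ext
  · apply Equiv.ext; intro x
    show ((sfun SX SY a).1.1 (x, y0 SY)).1 = a.1.1 x
    rfl
  · apply Equiv.ext; intro i
    show PtFun SX SY (sfun SX SY a) i = a.1.2 i
    by_cases h : i = SX.i0
    · subst h; rw [PtFun_i0, aut_i0 SX a]
    · have hw : (sfun SX SY a).1.2 (Sum.inl ⟨i, h⟩) =
        Sum.inl ⟨a.1.2 i, (aut_ne_i0 SX a i).mp h⟩ := rfl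
      rw [PtFun_inl SX SY _ h hw]

end WreathAux

/-- There is a surjective group homomorphism `P : Aut(X ⋏ Y) → Aut(X)`
(sending an automorphism to the one it induces on `X`) which admits a
splitting `s` given by `(g, τ) ↦ (g × id_Y, τ ⋏ id_{I_Y})`; consequently
`Aut(X ⋏ Y) ≅ ker P ⋊ Aut(X)`. -/
theorem wreath_aut_split {X Y IX IY : Type*}
    [Fintype X] [Fintype Y] [Fintype IX] [Fintype IY]
    [DecidableEq X] [DecidableEq Y] [DecidableEq IX] [DecidableEq IY]
    (SX : AssocScheme X IX) (SY : AssocScheme Y IY) :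
    ∃ P : autGroup (wreathR SX.R SX.i0 SY.R) →* autGroup SX.R,
      -- P sends an automorphism of the wreath product to the induced
      -- automorphism of X (on the underlying sets):
      (∀ w : autGroup (wreathR SX.R SX.i0 SY.R), ∀ x : X, ∀ y : Y,
        (P w : Equiv.Perm X × Equiv.Perm IX).1 x =
          ((w : Equiv.Perm (X × Y) × Equiv.Perm ({i : IX // i ≠ SX.i0} ⊕ IY)).1 (x, y)).1) ∧
      Function.Surjective P ∧
      ∃ s : autGroup SX.R →* autGroup (wreathR SX.R SX.i0 SY.R),
        (∀ a, P (s a) = a) ∧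
        (∀ a : autGroup SX.R, ∀ x y,
          (s a : Equiv.Perm (X × Y) × Equiv.Perm ({i : IX // i ≠ SX.i0} ⊕ IY)).1 (x, y) =
            ((a : Equiv.Perm X × Equiv.Perm IX).1 x, y)) ∧
        (∀ a : autGroup SX.R, ∀ j : IY,
          (s a : Equiv.Perm (X × Y) × Equiv.Perm ({i : IX // i ≠ SX.i0} ⊕ IY)).2 (Sum.inr j) =
            Sum.inr j) ∧
        (∀ a : autGroup SX.R, ∀ i : {i : IX // i ≠ SX.i0},
          Sum.map (Subtype.val) (id : IY → IY)
              ((s a : Equiv.Perm (X × Y) × Equiv.Perm ({i : IX // i ≠ SX.i0} ⊕ IY)).2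
                (Sum.inl i)) =
            Sum.inl ((a : Equiv.Perm X × Equiv.Perm IX).2 i.1)) ∧
        ∃ φ : autGroup SX.R →* MulAut P.ker,
          Nonempty (autGroup (wreathR SX.R SX.i0 SY.R) ≃* P.ker ⋊[φ] autGroup SX.R) := by
  classical
  refine ⟨WreathAux.P SX SY, fun w x y => WreathAux.Pg_apply SX SY w x y, ?_,
    WreathAux.s SX SY, fun a => WreathAux.P_sfun SX SY a, fun a x y => rfl,
    fun a j => rfl, fun a i => rfl, ?_⟩
  · intro a
    exact ⟨WreathAux.s SX SY a, WreathAux.P_sfun SX SY a⟩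
  · set P := WreathAux.P SX SY with hP
    set s := WreathAux.s SX SY with hs
    have hPs : ∀ a, P (s a) = a := fun a => WreathAux.P_sfun SX SY a
    refine ⟨(MulAut.conjNormal).comp s, ?_⟩
    have hcond : ∀ g : autGroup SX.R,
        (P.ker.subtype).comp (((MulAut.conjNormal).comp s g).toMonoidHom) =
          (MulAut.conj (s g)).toMonoidHom.comp P.ker.subtype := by
      intro g
      refine MonoidHom.ext fun n => ?_
      exact MulAut.conjNormal_apply (s g) n
    set L := SemidirectProduct.lift P.ker.subtype s hcond with hL
    have hLinj : Function.Injective L := by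
      rw [injective_iff_map_eq_one]
      intro x hx
      rcases x with ⟨l, r⟩
      have hx' : P.ker.subtype l * s r = 1 := hx
      have h1 : r = 1 := by
        have h2 := congrArg P hx'
        rw [_root_.map_mul, _root_.map_one] at h2
        have hk : P (P.ker.subtype l) = 1 := MonoidHom.mem_ker.mp l.2
        rw [hk, one_mul, hPs] at h2
        exact h2
      subst h1
      rw [_root_.map_one, mul_one] at hx'
      have h3 : l = 1 := Subtype.ext hx'
      subst h3
      rfl
    have hLsurj : Function.Surjective L := by
      intro g
      refine ⟨⟨⟨g * (s (P g))⁻¹, ?_⟩, P g⟩, ?_⟩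
      · rw [MonoidHom.mem_ker, _root_.map_mul, _root_.map_inv, hPs]
        simp
      · show (g * (s (P g))⁻¹) * s (P g) = g
        exact inv_mul_cancel_right g (s (P g))
    exact ⟨(MulEquiv.ofBijective L ⟨hLinj, hLsurj⟩).symm⟩
end

section
/- The direct product X × Y of two association schemes is Schurian if and only if both X and Y are Schurian. -/
open Matrix

/-- An association scheme with relation map `R` is Schurian if the group of
automorphisms acting trivially on the relation set acts transitively on each
relation `R⁻¹(i)`. -/
def IsSchurian {Z K : Type*} (R : Z → Z → K) : Prop :=
  ∀ x x' u u' : Z, R x x' = R u u' →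
    ∃ f : Equiv.Perm Z, (∀ a b, R (f a) (f b) = R a b) ∧ f x = u ∧ f x' = u'

/-- Schurian-ness of the product passes to the first factor. -/
lemma proj_schurian_fst {X Y IX IY : Type*} [Finite X]
    (RX : X → X → IX) (RY : Y → Y → IY) (i0Y : IY)
    (identY : ∀ y y', RY y y' = i0Y ↔ y = y') (y0 : Y)
    (h : IsSchurian (fun p q : X × Y => (RX p.1 q.1, RY p.2 q.2))) :
    IsSchurian RX := by
  intro x x' u u' hrel
  obtain ⟨f, hf, hx, hx'⟩ := h (x, y0) (x', y0) (u, y0) (u', y0) (by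
    simp only [Prod.mk.injEq]
    exact ⟨hrel, trivial⟩)
  -- second component of f on the fiber X × {y0} is constantly y0
  have hsnd : ∀ a : X, (f (a, y0)).2 = y0 := by
    intro a
    have := congrArg Prod.snd (hf (a, y0) (x, y0))
    simp only at this
    have h2 : RY (f (a, y0)).2 (f (x, y0)).2 = i0Y := by
      rw [this]; exact (identY y0 y0).mpr rfl
    have := (identY _ _).mp h2
    rw [this, hx]
  set g : X → X := fun a => (f (a, y0)).1 with hg
  have hinj : Function.Injective g := by
    intro a b hab
    have : f (a, y0) = f (b, y0) := by
      apply Prod.ext hab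
      rw [hsnd a, hsnd b]
    have := f.injective this
    exact congrArg Prod.fst this
  have hbij := Finite.injective_iff_bijective.mp hinj
  refine ⟨Equiv.ofBijective g hbij, ?_, ?_, ?_⟩
  · intro a b
    have := congrArg Prod.fst (hf (a, y0) (b, y0))
    simpa using this
  · show g x = u; rw [hg]; simp [hx]
  · show g x' = u'; rw [hg]; simp [hx']

/-- Schurian-ness of the product is symmetric in the two factors. -/
lemma prod_schurian_swap {X Y IX IY : Type*}
    (RX : X → X → IX) (RY : Y → Y → IY)
    (h : IsSchurian (fun p q : X × Y => (RX p.1 q.1, RY p.2 q.2))) :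
    IsSchurian (fun p q : Y × X => (RY p.1 q.1, RX p.2 q.2)) := by
  intro x x' u u' hrel
  simp only [Prod.mk.injEq] at hrel
  obtain ⟨f, hf, hx, hx'⟩ := h (x.2, x.1) (x'.2, x'.1) (u.2, u.1) (u'.2, u'.1) (by
    simp only [Prod.mk.injEq]
    exact ⟨hrel.2, hrel.1⟩)
  refine ⟨(Equiv.prodComm Y X).trans (f.trans (Equiv.prodComm X Y)), ?_, ?_, ?_⟩
  · intro a b
    have := hf (a.2, a.1) (b.2, b.1)
    simp only [Prod.mk.injEq] at this
    simp only [Equiv.trans_apply, Equiv.prodComm_apply, Prod.swap]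
    exact Prod.ext this.2 this.1
  · simp only [Equiv.trans_apply, Equiv.prodComm_apply, Prod.swap, hx]
  · simp only [Equiv.trans_apply, Equiv.prodComm_apply, Prod.swap, hx']

/-- The direct product `X × Y` of two association schemes is Schurian if and
only if both `X` and `Y` are Schurian. -/
theorem directProduct_schurian_iff {X Y IX IY : Type*}
    [Fintype X] [Fintype Y] [Fintype IX] [Fintype IY]
    [DecidableEq X] [DecidableEq Y] [DecidableEq IX] [DecidableEq IY]
    (SX : AssocScheme X IX) (SY : AssocScheme Y IY) :
    IsSchurian (fun p q : X × Y => (SX.R p.1 q.1, SY.R p.2 q.2)) ↔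
      (IsSchurian SX.R ∧ IsSchurian SY.R) := by
  constructor
  · intro h
    obtain ⟨⟨x0, y0'⟩, -⟩ := SX.surj SX.i0
    obtain ⟨⟨y0, _⟩, -⟩ := SY.surj SY.i0
    exact ⟨proj_schurian_fst SX.R SY.R SY.i0 SY.ident y0 h,
      proj_schurian_fst SY.R SX.R SX.i0 SX.ident x0
        (prod_schurian_swap SX.R SY.R h)⟩
  · rintro ⟨hX, hY⟩ p p' q q' hrel
    simp only [Prod.mk.injEq] at hrel
    obtain ⟨f, hf, hfx, hfx'⟩ := hX p.1 p'.1 q.1 q'.1 hrel.1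
    obtain ⟨g, hg, hgx, hgx'⟩ := hY p.2 p'.2 q.2 q'.2 hrel.2
    refine ⟨f.prodCongr g, ?_, ?_, ?_⟩
    · intro a b
      simp [Equiv.prodCongr_apply, hf, hg]
    exact Prod.ext hfx hgx
    exact Prod.ext hfx' hgx'
end

section
/- The wreath product X ⋏ Y of two association schemes is Schurian if and only if both X and Y are Schurian. -/
open Matrix

section Aux

variable {X Y IX IY : Type*} [DecidableEq IX]

lemma wreath_inl {RX : X → X → IX} {i0X : IX} {RY : Y → Y → IY} (p q : X × Y)
    (h : RX p.1 q.1 ≠ i0X) :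
    wreathR RX i0X RY p q = Sum.inl ⟨RX p.1 q.1, h⟩ := dif_neg h

lemma wreath_inr {RX : X → X → IX} {i0X : IX} {RY : Y → Y → IY} (p q : X × Y)
    (h : RX p.1 q.1 = i0X) :
    wreathR RX i0X RY p q = Sum.inr (RY p.2 q.2) := dif_pos h

/-- Combine a permutation of `X` with a fiberwise family of permutations of `Y`. -/
def combPerm (f : Equiv.Perm X) (g : X → Equiv.Perm Y) : Equiv.Perm (X × Y) where
  toFun p := (f p.1, g p.1 p.2)
  invFun p := (f.symm p.1, (g (f.symm p.1)).symm p.2)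
  left_inv := by rintro ⟨a, b⟩; simp
  right_inv := by rintro ⟨a, b⟩; simp

lemma combPerm_pres [Fintype X] [Fintype Y] [Fintype IX] [Fintype IY]
    [DecidableEq X] [DecidableEq Y] [DecidableEq IY]
    (SX : AssocScheme X IX) (SY : AssocScheme Y IY)
    (f : Equiv.Perm X) (hf : ∀ a b, SX.R (f a) (f b) = SX.R a b)
    (g : X → Equiv.Perm Y) (hg : ∀ a b c, SY.R (g a b) (g a c) = SY.R b c) :
    ∀ p q, wreathR SX.R SX.i0 SY.R (combPerm f g p) (combPerm f g q)
      = wreathR SX.R SX.i0 SY.R p q := by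
  rintro ⟨a, b⟩ ⟨a', b'⟩
  by_cases hc : SX.R a a' = SX.i0
  · obtain rfl : a = a' := (SX.ident a a').mp hc
    rw [wreath_inr (RY := SY.R) (a, b) (a, b') hc,
      wreath_inr (combPerm f g (a, b)) (combPerm f g (a, b'))
        (show SX.R (f a) (f a) = SX.i0 from (SX.ident _ _).mpr rfl)]
    exact congrArg Sum.inr (hg a b b')
  · have hc' : SX.R (f a) (f a') ≠ SX.i0 := by rw [hf]; exact hc
    rw [wreath_inl (RY := SY.R) (a, b) (a', b') hc,
      wreath_inl (combPerm f g (a, b)) (combPerm f g (a', b')) hc']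
    exact congrArg Sum.inl (Subtype.ext (hf a a'))

end Aux

/-- The wreath product `X ⋏ Y` of two association schemes is Schurian if and
only if both `X` and `Y` are Schurian. -/
theorem wreath_schurian_iff {X Y IX IY : Type*}
    [Fintype X] [Fintype Y] [Fintype IX] [Fintype IY]
    [DecidableEq X] [DecidableEq Y] [DecidableEq IX] [DecidableEq IY]
    (SX : AssocScheme X IX) (SY : AssocScheme Y IY) :
    IsSchurian (wreathR SX.R SX.i0 SY.R) ↔
      (IsSchurian SX.R ∧ IsSchurian SY.R) := by
  obtain ⟨px, -⟩ := SX.surj SX.i0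
  obtain ⟨py, -⟩ := SY.surj SY.i0
  set x0 : X := px.1 with hx0
  set y0 : Y := py.1 with hy0
  constructor
  · intro hS
    constructor
    · -- X is Schurian
      intro x x' u u' h
      have hW : wreathR SX.R SX.i0 SY.R (x, y0) (x', y0)
          = wreathR SX.R SX.i0 SY.R (u, y0) (u', y0) := by
        by_cases hc : SX.R x x' = SX.i0
        · rw [wreath_inr _ _ hc, wreath_inr (u, y0) (u', y0) (by rw [← h]; exact hc)]
        · rw [wreath_inl _ _ hc, wreath_inl (u, y0) (u', y0) (by rw [← h]; exact hc)]
          exact congrArg Sum.inl (Subtype.ext h)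
      obtain ⟨F, hF, hFx, hFx'⟩ := hS (x, y0) (x', y0) (u, y0) (u', y0) hW
      have key : ∀ a b : X, (F (a, y0)).1 = (F (b, y0)).1 → a = b := by
        intro a b hab
        have h1 : SX.R (F (a, y0)).1 (F (b, y0)).1 = SX.i0 := (SX.ident _ _).mpr hab
        have h2 := hF (a, y0) (b, y0)
        rw [wreath_inr _ _ h1] at h2
        by_cases hcc : SX.R a b = SX.i0
        · exact (SX.ident a b).mp hcc
        · rw [wreath_inl (RY := SY.R) (a, y0) (b, y0) hcc] at h2
          exact absurd h2 (by simp)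
      have hbij : Function.Bijective (fun a : X => (F (a, y0)).1) :=
        Finite.injective_iff_bijective.mp (fun a b hab => key a b hab)
      refine ⟨Equiv.ofBijective _ hbij, ?_, ?_, ?_⟩
      · intro a b
        by_cases hab : a = b
        · subst hab
          rw [(SX.ident _ _).mpr rfl, (SX.ident _ _).mpr rfl]
        · have hab' : SX.R a b ≠ SX.i0 := fun hc => hab ((SX.ident a b).mp hc)
          have hfab : SX.R (F (a, y0)).1 (F (b, y0)).1 ≠ SX.i0 :=
            fun hc => hab (key a b ((SX.ident _ _).mp hc))
          have h2 := hF (a, y0) (b, y0)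
          rw [wreath_inl (RY := SY.R) (a, y0) (b, y0) hab',
            wreath_inl (F (a, y0)) (F (b, y0)) hfab] at h2
          exact congrArg Subtype.val (Sum.inl_injective h2)
      · show (F (x, y0)).1 = u
        rw [hFx]
      · show (F (x', y0)).1 = u'
        rw [hFx']
    · -- Y is Schurian
      intro y y' v v' h
      have hi0 : SX.R x0 x0 = SX.i0 := (SX.ident _ _).mpr rfl
      have hW : wreathR SX.R SX.i0 SY.R (x0, y) (x0, y')
          = wreathR SX.R SX.i0 SY.R (x0, v) (x0, v') := by
        rw [wreath_inr (x0, y) (x0, y') hi0, wreath_inr (x0, v) (x0, v') hi0]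
        exact congrArg Sum.inr h
      obtain ⟨F, hF, hFy, hFy'⟩ := hS (x0, y) (x0, y') (x0, v) (x0, v') hW
      have key : ∀ b : Y, (F (x0, b)).1 = x0 := by
        intro b
        have h2 := hF (x0, b) (x0, y)
        rw [wreath_inr (RY := SY.R) (x0, b) (x0, y) hi0] at h2
        by_cases hcc : SX.R (F (x0, b)).1 (F (x0, y)).1 = SX.i0
        · have := (SX.ident _ _).mp hcc
          rw [hFy] at this
          exact this
        · rw [wreath_inl _ _ hcc] at h2
          exact absurd h2 (by simp)
      have keyF : ∀ b : Y, F (x0, b) = (x0, (F (x0, b)).2) := by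
        intro b
        exact Prod.ext (key b) rfl
      have hgrel : ∀ b c : Y, SY.R (F (x0, b)).2 (F (x0, c)).2 = SY.R b c := by
        intro b c
        have h2 := hF (x0, b) (x0, c)
        rw [wreath_inr (RY := SY.R) (x0, b) (x0, c) hi0,
          wreath_inr (F (x0, b)) (F (x0, c)) (by rw [key b, key c]; exact hi0)] at h2
        exact Sum.inr_injective h2
      have hbij : Function.Bijective (fun b : Y => (F (x0, b)).2) := by
        apply Finite.injective_iff_bijective.mp
        intro b c hbc
        have hbc' : (F (x0, b)).2 = (F (x0, c)).2 := hbc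
        have : F (x0, b) = F (x0, c) := by
          rw [keyF b, keyF c, hbc']
        have := F.injective this
        exact (Prod.mk.injEq _ _ _ _ ▸ this).2
      refine ⟨Equiv.ofBijective _ hbij, ?_, ?_, ?_⟩
      · intro b c
        exact hgrel b c
      · show (F (x0, y)).2 = v
        rw [hFy]
      · show (F (x0, y')).2 = v'
        rw [hFy']
  · rintro ⟨hX, hY⟩ ⟨x, y⟩ ⟨x', y'⟩ ⟨u, v⟩ ⟨u', v'⟩ h
    by_cases hxx : SX.R x x' = SX.i0
    · obtain rfl : x = x' := (SX.ident _ _).mp hxx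
      rw [wreath_inr (RY := SY.R) (x, y) (x, y') hxx] at h
      by_cases huu : SX.R u u' = SX.i0
      · obtain rfl : u = u' := (SX.ident _ _).mp huu
        rw [wreath_inr (u, v) (u, v') huu] at h
        have hyy : SY.R y y' = SY.R v v' := Sum.inr_injective h
        obtain ⟨f, hf, hfx, -⟩ := hX x x u u (by
          rw [(SX.ident x x).mpr rfl, (SX.ident u u).mpr rfl])
        obtain ⟨g, hg, hgy, hgy'⟩ := hY y y' v v' hyy
        refine ⟨combPerm f (fun a => if a = x then g else Equiv.refl Y),
          combPerm_pres SX SY f hf _ ?_, ?_, ?_⟩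
        · intro a b c
          by_cases ha : a = x <;> simp [ha, hg]
        · show (f x, _) = (u, v)
          simp [hfx, hgy]
        · show (f x, _) = (u, v')
          simp [hfx, hgy']
      · rw [wreath_inl (u, v) (u', v') huu] at h
        exact absurd h (by simp)
    · rw [wreath_inl (RY := SY.R) (x, y) (x', y') hxx] at h
      by_cases huu : SX.R u u' = SX.i0
      · rw [wreath_inr (u, v) (u', v') huu] at h
        exact absurd h (by simp)
      · rw [wreath_inl (u, v) (u', v') huu] at h
        have hRX : SX.R x x' = SX.R u u' := congrArg Subtype.val (Sum.inl_injective h)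
        have hne : x ≠ x' := fun hc => hxx ((SX.ident x x').mpr hc)
        obtain ⟨f, hf, hfx, hfx'⟩ := hX x x' u u' hRX
        obtain ⟨g1, hg1, hg1y, -⟩ := hY y y v v (by
          rw [(SY.ident y y).mpr rfl, (SY.ident v v).mpr rfl])
        obtain ⟨g2, hg2, hg2y, -⟩ := hY y' y' v' v' (by
          rw [(SY.ident y' y').mpr rfl, (SY.ident v' v').mpr rfl])
        refine ⟨combPerm f (fun a => if a = x then g1 else if a = x' then g2 else Equiv.refl Y),
          combPerm_pres SX SY f hf _ ?_, ?_, ?_⟩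
        · intro a b c
          by_cases ha : a = x
          · simp [ha, hg1]
          · by_cases ha' : a = x' <;> simp [ha, ha', hg2, hne.symm]
        · show (f x, _) = (u, v)
          simp [hfx, hg1y]
        · show (f x', _) = (u', v')
          simp [hfx', hne.symm, hg2y]
end

section
/- If r₁ : G₁ → I₁ and r₂ : G₂ → I₂ give S-rings (equivalently Cayley association schemes) on finite groups G₁ and G₂, then the wreath product of the corresponding Cayley schemes is again a Cayley association scheme on the group G₁ × G₂, with relation map (g₁, g₂) ↦ lex(r₁(g₁), r₂(g₂)). -/
open Matrix

lemma lexMap_eq_inl {IX IY : Type*} [DecidableEq IX] (i0 : IX) (p : IX × IY)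
    (k : IX) (hk : k ≠ i0) : lexMap i0 p = Sum.inl ⟨k, hk⟩ ↔ p.1 = k := by
  unfold lexMap
  split_ifs with h
  · simp only [reduceCtorEq, false_iff]
    rintro rfl; exact hk h
  · simp [Subtype.ext_iff]

lemma lexMap_eq_inr {IX IY : Type*} [DecidableEq IX] (i0 : IX) (p : IX × IY)
    (j : IY) : lexMap i0 p = Sum.inr j ↔ (p.1 = i0 ∧ p.2 = j) := by
  unfold lexMap
  split_ifs with h <;> simp [h]

lemma sum_split {I : Type*} [Fintype I] [DecidableEq I] (i0 : I) (f : I → ℂ) :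
    ∑ k, f k = f i0 + ∑ k : {i // i ≠ i0}, f (k : I) := by
  rw [← Finset.add_sum_erase _ f (Finset.mem_univ i0)]
  congr 1
  rw [← Finset.filter_ne']
  exact Finset.sum_subtype _ (by simp) f

lemma sum_inv_mul {G I : Type*} [Group G] [Fintype G] [DecidableEq I]
    (r : G → I) (y : G) (j : I) :
    ∑ z : G, (if r (z⁻¹ * y) = j then (1:ℂ) else 0) = ∑ g : G, (if r g = j then 1 else 0) := by
  apply Fintype.sum_equiv ((Equiv.inv G).trans (Equiv.mulRight y))
  intro z; simp

lemma sum_mul_left' {G I : Type*} [Group G] [Fintype G] [DecidableEq I]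
    (r : G → I) (x : G) (j : I) :
    ∑ z : G, (if r (x⁻¹ * z) = j then (1:ℂ) else 0) = ∑ g : G, (if r g = j then 1 else 0) := by
  apply Fintype.sum_equiv (Equiv.mulLeft x⁻¹)
  intro z; simp; rfl

lemma ite_and_one (P Q : Prop) [Decidable P] [Decidable Q] :
    (if P ∧ Q then (1:ℂ) else 0) = (if P then 1 else 0) * (if Q then 1 else 0) := by
  split_ifs with h h1 h2 <;> simp_all

lemma collapse_right {G I : Type*} [Group G] [Fintype G] [DecidableEq G] [DecidableEq I]
    (r : G → I) (hone : ∀ x y : G, r (x⁻¹ * y) = r 1 ↔ x = y) (x y : G) (i : I) :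
    ∑ z : G, (if r (x⁻¹ * z) = i then (1:ℂ) else 0) * (if r (z⁻¹ * y) = r 1 then 1 else 0)
      = if r (x⁻¹ * y) = i then 1 else 0 := by
  simp only [hone, mul_ite, mul_one, mul_zero, Finset.sum_ite_eq', Finset.mem_univ, if_true]

lemma collapse_left {G I : Type*} [Group G] [Fintype G] [DecidableEq G] [DecidableEq I]
    (r : G → I) (hone : ∀ x y : G, r (x⁻¹ * y) = r 1 ↔ x = y) (x y : G) (i : I) :
    ∑ z : G, (if r (x⁻¹ * z) = r 1 then (1:ℂ) else 0) * (if r (z⁻¹ * y) = i then 1 else 0)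
      = if r (x⁻¹ * y) = i then 1 else 0 := by
  simp only [hone, ite_mul, one_mul, zero_mul, Finset.sum_ite_eq, Finset.mem_univ, if_true]

lemma factor_sum' {A B : Type*} [Fintype A] [Fintype B] (h : A × B → ℂ) (f : A → ℂ) (g : B → ℂ)
    (hh : ∀ a b, h (a, b) = f a * g b) :
    ∑ z : A × B, h z = (∑ a, f a) * (∑ b, g b) := by
  rw [Finset.sum_mul_sum, Fintype.sum_prod_type]
  exact Finset.sum_congr rfl fun a _ => Finset.sum_congr rfl fun b _ => hh a b

/-- If `r₁ : G₁ → I₁` and `r₂ : G₂ → I₂` give S-rings (equivalently Cayley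
association schemes) on finite groups `G₁`, `G₂`, then the wreath product of
the corresponding Cayley schemes is again a Cayley association scheme on
`G₁ × G₂`, with relation map `(g₁, g₂) ↦ lex (r₁ g₁, r₂ g₂)`. -/
theorem cayley_wreath {G₁ G₂ I₁ I₂ : Type*}
    [Group G₁] [Group G₂]
    [Fintype G₁] [Fintype G₂] [Fintype I₁] [Fintype I₂]
    [DecidableEq G₁] [DecidableEq G₂] [DecidableEq I₁] [DecidableEq I₂]
    (r₁ : G₁ → I₁) (r₂ : G₂ → I₂)
    (h₁ : ∃ S₁ : AssocScheme G₁ I₁, S₁.R = fun g h => r₁ (g⁻¹ * h))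
    (h₂ : ∃ S₂ : AssocScheme G₂ I₂, S₂.R = fun g h => r₂ (g⁻¹ * h)) :
    ∃ S : AssocScheme (G₁ × G₂) ({i : I₁ // i ≠ r₁ 1} ⊕ I₂),
      S.R = fun p q =>
        lexMap (r₁ 1) (r₁ (p.1⁻¹ * q.1), r₂ (p.2⁻¹ * q.2)) := by
  obtain ⟨S₁, hS₁⟩ := h₁
  obtain ⟨S₂, hS₂⟩ := h₂
  have e₁ : r₁ 1 = S₁.i0 := by
    have h := (S₁.ident 1 1).mpr rfl
    rw [hS₁] at h; simpa using h
  have h1iff : ∀ x y : G₁, (r₁ (x⁻¹ * y) = r₁ 1 ↔ x = y) := by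
    intro x y
    rw [e₁]
    have h := S₁.ident x y
    rw [hS₁] at h; simpa using h
  have h2iff : ∀ x y : G₂, (r₂ (x⁻¹ * y) = S₂.i0 ↔ x = y) := by
    intro x y
    have h := S₂.ident x y
    rw [hS₂] at h; simpa using h
  refine ⟨⟨fun p q => lexMap (r₁ 1) (r₁ (p.1⁻¹ * q.1), r₂ (p.2⁻¹ * q.2)),
    ?_, Sum.inr S₂.i0, ?_, ?_, ?_⟩, rfl⟩
  · -- surjectivity
    rintro (⟨i, hi⟩ | j)
    · obtain ⟨⟨x, y⟩, hxy⟩ := S₁.surj i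
      rw [hS₁] at hxy
      simp only at hxy
      exact ⟨((x, 1), (y, 1)), by simpa [lexMap_eq_inl] using hxy⟩
    · obtain ⟨⟨x, y⟩, hxy⟩ := S₂.surj j
      rw [hS₂] at hxy
      simp only at hxy
      refine ⟨((1, x), (1, y)), ?_⟩
      simp only [lexMap_eq_inr]
      simpa using hxy
  · -- ident
    intro p q
    simp only [lexMap_eq_inr, h1iff, h2iff, Prod.ext_iff]
  · -- symm
    rintro (⟨i, hi⟩ | j)
    · obtain ⟨i', hsi⟩ := S₁.symm i
      rw [hS₁] at hsi
      simp only at hsi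
      have hi' : i' ≠ r₁ 1 := by
        intro h
        apply hi
        have := (hsi 1 1).mpr (by simpa using h.symm)
        simpa using this.symm
      refine ⟨Sum.inl ⟨i', hi'⟩, fun p q => ?_⟩
      simp only [lexMap_eq_inl]
      exact hsi p.1 q.1
    · obtain ⟨j', hsj⟩ := S₂.symm j
      rw [hS₂] at hsj
      simp only at hsj
      refine ⟨Sum.inr j', fun p q => ?_⟩
      simp only [lexMap_eq_inr, h1iff]
      rw [hsj p.2 q.2, eq_comm (a := p.1)]
  · -- closed
    have Ainl : ∀ (k : I₁) (hk : k ≠ r₁ 1) (p q : G₁ × G₂),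
        adjMat (fun p q : G₁ × G₂ => lexMap (r₁ 1) (r₁ (p.1⁻¹ * q.1), r₂ (p.2⁻¹ * q.2)))
          (Sum.inl ⟨k, hk⟩) p q = (if r₁ (p.1⁻¹ * q.1) = k then (1:ℂ) else 0) := by
      intro k hk p q
      simp only [adjMat, lexMap_eq_inl]
    have Ainr : ∀ (j : I₂) (p q : G₁ × G₂),
        adjMat (fun p q : G₁ × G₂ => lexMap (r₁ 1) (r₁ (p.1⁻¹ * q.1), r₂ (p.2⁻¹ * q.2)))
          (Sum.inr j) p q = (if r₁ (p.1⁻¹ * q.1) = r₁ 1 then (1:ℂ) else 0) *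
            (if r₂ (p.2⁻¹ * q.2) = j then (1:ℂ) else 0) := by
      intro j p q
      simp only [adjMat, lexMap_eq_inr]
      exact ite_and_one _ _
    rintro (⟨i, hi⟩ | j) (⟨i', hi'⟩ | j')
    · -- inl * inl
      obtain ⟨c, hc⟩ := S₁.closed i i'
      rw [hS₁] at hc
      refine ⟨Sum.elim (fun k => (Fintype.card G₂ : ℂ) * c k.1)
        (fun _ => (Fintype.card G₂ : ℂ) * c (r₁ 1)), ?_⟩
      ext x y
      have hcE := congrFun (congrFun hc x.1) y.1
      simp only [Matrix.mul_apply, adjMat, Matrix.sum_apply, Matrix.smul_apply,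
        smul_eq_mul] at hcE
      rw [Matrix.mul_apply, Fintype.sum_sum_type]
      simp only [Matrix.sum_apply, Matrix.add_apply, Matrix.smul_apply, smul_eq_mul,
        Sum.elim_inl, Sum.elim_inr, Ainl, Ainr]
      rw [factor_sum' _
        (fun z₁ => (if r₁ (x.1⁻¹ * z₁) = i then (1:ℂ) else 0) *
          (if r₁ (z₁⁻¹ * y.1) = i' then (1:ℂ) else 0))
        (fun _ : G₂ => (1:ℂ)) (fun a b => by ring)]
      simp only [Finset.sum_const, Finset.card_univ, nsmul_eq_mul, mul_one]
      rw [hcE,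
        sum_split (r₁ 1) (fun k => c k * if r₁ (x.1⁻¹ * y.1) = k then 1 else 0)]
      simp only [mul_ite, ite_mul, mul_one, mul_zero, zero_mul, one_mul,
        Finset.sum_ite_eq, Finset.mem_univ, if_true]
      rw [add_mul, Finset.sum_mul, add_comm]
      congr 1
      · exact Finset.sum_congr rfl fun k _ => by split_ifs <;> ring
      · split_ifs <;> ring
    · -- inl * inr
      refine ⟨Sum.elim (fun k => if k = (⟨i, hi⟩ : {i : I₁ // i ≠ r₁ 1}) then
        (∑ g : G₂, if r₂ g = j' then (1:ℂ) else 0) else 0) (fun _ => 0), ?_⟩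
      ext x y
      rw [Matrix.mul_apply, Fintype.sum_sum_type]
      simp only [Matrix.sum_apply, Matrix.add_apply, Matrix.smul_apply, smul_eq_mul,
        Sum.elim_inl, Sum.elim_inr, Ainl, Ainr]
      rw [factor_sum' _
        (fun z₁ => (if r₁ (x.1⁻¹ * z₁) = i then (1:ℂ) else 0) *
          (if r₁ (z₁⁻¹ * y.1) = r₁ 1 then (1:ℂ) else 0))
        (fun z₂ : G₂ => (if r₂ (z₂⁻¹ * y.2) = j' then (1:ℂ) else 0)) (fun a b => by ring),
        sum_inv_mul r₂ y.2 j', collapse_right r₁ h1iff x.1 y.1 i]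
      simp only [ite_mul, zero_mul, Finset.sum_ite_eq', Finset.mem_univ, if_true,
        Finset.sum_const_zero, add_zero]
      split_ifs <;> ring
    · -- inr * inl
      refine ⟨Sum.elim (fun k => if k = (⟨i', hi'⟩ : {i : I₁ // i ≠ r₁ 1}) then
        (∑ g : G₂, if r₂ g = j then (1:ℂ) else 0) else 0) (fun _ => 0), ?_⟩
      ext x y
      rw [Matrix.mul_apply, Fintype.sum_sum_type]
      simp only [Matrix.sum_apply, Matrix.add_apply, Matrix.smul_apply, smul_eq_mul,
        Sum.elim_inl, Sum.elim_inr, Ainl, Ainr]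
      rw [factor_sum' _
        (fun z₁ => (if r₁ (x.1⁻¹ * z₁) = r₁ 1 then (1:ℂ) else 0) *
          (if r₁ (z₁⁻¹ * y.1) = i' then (1:ℂ) else 0))
        (fun z₂ : G₂ => (if r₂ (x.2⁻¹ * z₂) = j then (1:ℂ) else 0)) (fun a b => by ring),
        sum_mul_left' r₂ x.2 j, collapse_left r₁ h1iff x.1 y.1 i']
      simp only [ite_mul, zero_mul, Finset.sum_ite_eq', Finset.mem_univ, if_true,
        Finset.sum_const_zero, add_zero]
      split_ifs <;> ring
    · -- inr * inr
      obtain ⟨c, hc⟩ := S₂.closed j j'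
      rw [hS₂] at hc
      refine ⟨Sum.elim (fun _ => 0) c, ?_⟩
      ext x y
      have hcE := congrFun (congrFun hc x.2) y.2
      simp only [Matrix.mul_apply, adjMat, Matrix.sum_apply, Matrix.smul_apply,
        smul_eq_mul] at hcE
      rw [Matrix.mul_apply, Fintype.sum_sum_type]
      simp only [Matrix.sum_apply, Matrix.add_apply, Matrix.smul_apply, smul_eq_mul,
        Sum.elim_inl, Sum.elim_inr, Ainl, Ainr]
      rw [factor_sum' _
        (fun z₁ => (if r₁ (x.1⁻¹ * z₁) = r₁ 1 then (1:ℂ) else 0) *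
          (if r₁ (z₁⁻¹ * y.1) = r₁ 1 then (1:ℂ) else 0))
        (fun z₂ : G₂ => (if r₂ (x.2⁻¹ * z₂) = j then (1:ℂ) else 0) *
          (if r₂ (z₂⁻¹ * y.2) = j' then (1:ℂ) else 0)) (fun a b => by ring),
        hcE, collapse_left r₁ h1iff x.1 y.1 (r₁ 1)]
      simp only [zero_mul, Finset.sum_const_zero, zero_add]
      rw [Finset.mul_sum]
      exact Finset.sum_congr rfl fun k _ => by ring
end
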